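/- arXiv:2011.03619 — 7 statements merged into one kernel-verified Lean document; each statement's English description precedes it below -/
import Mathlib

section
/- If every vertex of an n-vertex graph G has degree at least n/2, then G contains a Hamiltonian cycle. -/
/-!
Take a longest path `p = a ⋯ b`. Maximality puts every neighbour of `a` and of `b` on `p`, and
since `deg a + deg b ≥ n > length p`, pigeonhole gives an index `i` with `a ~ pᵢ₊₁` and `b ~ pᵢ`.
Then `a, pᵢ₊₁, …, b, pᵢ, …, a` is a cycle through all vertices of `p`. The degree condition
makes `G` connected, so if this cycle missed a vertex, some vertex off the cycle would be adjacent
to it, and opening the cycle there would give a path longer than `p`.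
-/

open Finset

namespace SimpleGraph

variable {V : Type*} {G : SimpleGraph V}

section Degree

variable [Fintype V] [DecidableRel G.Adj]

lemma exists_adj_adj_of_card_lt_degree_add_degree {u v : V} (huv : u ≠ v) (hadj : ¬ G.Adj u v)
    (hdeg : Fintype.card V < G.degree u + G.degree v + 2) : ∃ w, G.Adj u w ∧ G.Adj w v := by
  classical
  by_contra! hnone
  have hdisj : Disjoint (G.neighborFinset u) (G.neighborFinset v) :=
    Finset.disjoint_left.mpr fun w hu hv ↦ hnone w ((mem_neighborFinset ..).mp hu)
      ((mem_neighborFinset ..).mp hv).symm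
  have hsub : G.neighborFinset u ∪ G.neighborFinset v ⊆ ({u, v} : Finset V)ᶜ := by
    intro w hw
    simp only [mem_union, mem_neighborFinset] at hw
    simp only [mem_compl, mem_insert, mem_singleton]
    rintro (rfl | rfl) <;> rcases hw with hw | hw
    exacts [G.irrefl hw, hadj hw.symm, hadj hw, G.irrefl hw]
  have hcard := card_le_card hsub
  have htwo := card_le_univ ({u, v} : Finset V)
  rw [card_union_of_disjoint hdisj, card_compl, card_pair huv, card_neighborFinset_eq_degree,
    card_neighborFinset_eq_degree] at hcard
  rw [card_pair huv] at htwo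
  omega

lemma preconnected_of_card_lt_degree_add_degree
    (hdeg : ∀ u v, Fintype.card V < G.degree u + G.degree v + 2) : G.Preconnected := by
  intro u v
  by_cases huv : u = v
  · exact huv ▸ Reachable.refl u
  by_cases hadj : G.Adj u v
  · exact hadj.reachable
  obtain ⟨w, huw, hwv⟩ := exists_adj_adj_of_card_lt_degree_add_degree huv hadj (hdeg u v)
  exact huw.reachable.trans hwv.reachable

end Degree

namespace Walk

variable {a b : V}

structure IsLongestPath (p : G.Walk a b) : Prop where
  isPath : p.IsPath
  length_le ⦃x y : V⦄ (q : G.Walk x y) : q.IsPath → q.length ≤ p.length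

lemma exists_isLongestPath [Fintype V] [Nonempty V] :
    ∃ (a b : V) (p : G.Walk a b), p.IsLongestPath := by
  obtain ⟨v⟩ := ‹Nonempty V›
  set lengths : Set ℕ := {n | ∃ (x y : V) (q : G.Walk x y), q.IsPath ∧ q.length = n}
  have hbdd : BddAbove lengths :=
    ⟨Fintype.card V, by rintro _ ⟨x, y, q, hq, rfl⟩; exact hq.length_lt.le⟩
  obtain ⟨a, b, p, hp, hlen⟩ := Nat.sSup_mem (s := lengths) ⟨0, v, v, nil, .nil, rfl⟩ hbdd
  exact ⟨a, b, p, hp, fun x y q hq ↦ hlen ▸ le_csSup hbdd ⟨x, y, q, hq, rfl⟩⟩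

lemma IsLongestPath.reverse {p : G.Walk a b} (hp : p.IsLongestPath) : p.reverse.IsLongestPath :=
  ⟨hp.isPath.reverse, fun _ _ q hq ↦ p.length_reverse ▸ hp.length_le q hq⟩

lemma IsLongestPath.mem_support_of_adj_start {p : G.Walk a b} (hp : p.IsLongestPath) {x : V}
    (hx : G.Adj a x) : x ∈ p.support := by
  by_contra hxp
  have := hp.length_le (cons hx.symm p) ((cons_isPath_iff _ _).mpr ⟨hp.isPath, hxp⟩)
  simp at this

lemma IsLongestPath.mem_support_of_adj_end {p : G.Walk a b} (hp : p.IsLongestPath) {x : V}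
    (hx : G.Adj b x) : x ∈ p.support := by
  simpa using hp.reverse.mem_support_of_adj_start hx

lemma IsPath.degree_le_length [Fintype V] [DecidableRel G.Adj] {p : G.Walk a b} (hp : p.IsPath)
    {x : V} (hx : x ∈ p.support) (hnbr : ∀ y, G.Adj x y → y ∈ p.support) :
    G.degree x ≤ p.length := by
  classical
  have hsub : G.neighborFinset x ⊆ p.support.toFinset.erase x := fun y hy ↦ by
    rw [mem_neighborFinset] at hy
    exact mem_erase.mpr ⟨hy.ne', List.mem_toFinset.mpr (hnbr y hy)⟩
  have := card_le_card hsub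
  rw [card_erase_of_mem (List.mem_toFinset.mpr hx), List.toFinset_card_of_nodup hp.support_nodup,
    length_support, card_neighborFinset_eq_degree] at this
  omega

lemma exists_crossing_neighbors [Fintype V] [DecidableRel G.Adj] {p : G.Walk a b}
    (ha : ∀ x, G.Adj a x → x ∈ p.support) (hb : ∀ x, G.Adj b x → x ∈ p.support)
    (hdeg : p.length < G.degree a + G.degree b) :
    ∃ i < p.length, G.Adj a (p.getVert (i + 1)) ∧ G.Adj b (p.getVert i) := by
  classical
  set A := (range p.length).filter fun i ↦ G.Adj a (p.getVert (i + 1))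
  set B := (range p.length).filter fun i ↦ G.Adj b (p.getVert i)
  have hA : G.degree a ≤ #A := by
    rw [← card_neighborFinset_eq_degree]
    refine (card_le_card fun x hx ↦ ?_).trans (card_image_le (f := fun i ↦ p.getVert (i + 1)))
    rw [mem_neighborFinset] at hx
    obtain ⟨m, rfl, hm⟩ := mem_support_iff_exists_getVert.mp (ha x hx)
    obtain _ | i := m
    · simp at hx
    · exact mem_image.mpr ⟨i, mem_filter.mpr ⟨mem_range.mpr (by omega), hx⟩, rfl⟩
  have hB : G.degree b ≤ #B := by
    rw [← card_neighborFinset_eq_degree]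
    refine (card_le_card fun x hx ↦ ?_).trans (card_image_le (f := p.getVert))
    rw [mem_neighborFinset] at hx
    obtain ⟨m, rfl, hm⟩ := mem_support_iff_exists_getVert.mp (hb x hx)
    have hm' : m ≠ p.length := by rintro rfl; simp at hx
    exact mem_image.mpr ⟨m, mem_filter.mpr ⟨mem_range.mpr (by omega), hx⟩, rfl⟩
  have hAB : #(A ∪ B) ≤ p.length :=
    (card_le_card (union_subset (filter_subset _ _) (filter_subset _ _))).trans (card_range _).le
  obtain ⟨i, hi⟩ : (A ∩ B).Nonempty := by
    rw [← card_pos]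
    have := card_union_add_card_inter A B
    omega
  simp only [A, B, mem_inter, mem_filter, mem_range] at hi
  exact ⟨i, hi.1.1, hi.1.2, hi.2.2⟩

lemma IsPath.exists_isCycle_length_eq_add_one {p : G.Walk a b} (hp : p.IsPath)
    (hlen : 2 ≤ p.length) {i : ℕ} (hi : i < p.length) (ha : G.Adj a (p.getVert (i + 1)))
    (hb : G.Adj b (p.getVert i)) : ∃ c : G.Walk a a, c.IsCycle ∧ c.length = p.length + 1 := by
  -- `rest` runs `pᵢ₊₁ → ⋯ → b → pᵢ → ⋯ → a`; the edge `a ~ pᵢ₊₁` closes it up.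
  let rest : G.Walk (p.getVert (i + 1)) a := (p.drop (i + 1)).append (cons hb (p.take i).reverse)
  have hperm : rest.support.Perm p.support := by
    have hsupp : rest.support = p.support.drop (i + 1) ++ (p.support.take (i + 1)).reverse := by
      simp [rest, support_append, support_take, Nat.min_eq_left (Nat.succ_le_of_lt hi)]
    rw [hsupp]
    exact (List.perm_append_comm.trans ((List.reverse_perm _).append_right _)).trans
      (List.Perm.of_eq (List.take_append_drop _ _))
  have hrest : rest.length = p.length := by
    simp only [rest, length_append, length_cons, length_reverse, drop_length, take_length]
    omega
  refine ⟨cons ha rest, isCycle_iff_isPath_tail_and_le_length.mpr ⟨?_, ?_⟩, by simp [hrest]⟩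
  · refine IsPath.mk' ?_
    rw [support_tail_of_not_nil _ not_nil_cons, support_cons, List.tail_cons]
    exact hperm.nodup_iff.mpr hp.support_nodup
  · rw [length_cons, hrest]
    omega

lemma IsCycle.exists_isPath_length_eq_of_notMem_support [DecidableEq V] {c : G.Walk a a}
    (hc : c.IsCycle) (hG : G.Preconnected) {x : V} (hx : x ∉ c.support) :
    ∃ (u v : V) (q : G.Walk u v), q.IsPath ∧ q.length = c.length := by
  obtain ⟨d, -, hd, hdx⟩ := (hG a x).some.exists_boundary_dart {y | y ∈ c.support}
    c.start_mem_support hx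
  let c' := c.rotate d.fst hd
  have hc' : c'.IsCycle := hc.rotate hd
  have hnotMem : d.snd ∉ c'.tail.support := by
    rw [support_tail_of_not_nil _ hc'.not_nil]
    exact fun h ↦ hdx ((mem_support_rotate_iff ..).mp (List.mem_of_mem_tail h))
  refine ⟨_, _, cons d.adj.symm c'.tail.reverse, ?_, ?_⟩
  · refine (cons_isPath_iff _ _).mpr ⟨hc'.isPath_tail.reverse, ?_⟩
    rwa [support_reverse, List.mem_reverse]
  · rw [length_cons, length_reverse, length_tail_add_one hc'.not_nil, length_rotate]

lemma IsCycle.isHamiltonianCycle_of_forall_mem_support [DecidableEq V] {c : G.Walk a a}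
    (hc : c.IsCycle) (hall : ∀ x, x ∈ c.support) : c.IsHamiltonianCycle := by
  refine isHamiltonianCycle_isCycle_and_isHamiltonian_tail.mpr
    ⟨hc, hc.isPath_tail.isHamiltonian_of_mem fun x ↦ ?_⟩
  have hx := hall x
  rw [← c.cons_tail_support, List.mem_cons] at hx
  rcases hx with rfl | h
  · exact c.tail.end_mem_support
  · rwa [support_tail_of_not_nil _ hc.not_nil]

end Walk

end SimpleGraph

open SimpleGraph Walk

/-- Dirac's theorem: if every vertex of an `n`-vertex graph `G` (with `n ≥ 3`)
has degree at least `n/2`, then `G` contains a Hamiltonian cycle. -/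
theorem stmt_1 {V : Type*} [Fintype V] [DecidableEq V] (G : SimpleGraph V)
    [DecidableRel G.Adj] (hn : 3 ≤ Fintype.card V)
    (hdeg : ∀ v : V, Fintype.card V ≤ 2 * G.degree v) :
    ∃ (v : V) (c : G.Walk v v), c.IsHamiltonianCycle := by
  have : Nonempty V := Fintype.card_pos_iff.mp (by omega)
  obtain ⟨a, b, p, hp⟩ := exists_isLongestPath (G := G)
  have hnbr_a := fun x ↦ hp.mem_support_of_adj_start (x := x)
  have hnbr_b := fun x ↦ hp.mem_support_of_adj_end (x := x)
  have hlen : 2 ≤ p.length := by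
    have := hp.isPath.degree_le_length p.start_mem_support hnbr_a
    have := hdeg a
    omega
  have hsum : p.length < G.degree a + G.degree b := by
    have := hp.isPath.length_lt
    have := hdeg a
    have := hdeg b
    omega
  obtain ⟨i, hi, hai, hbi⟩ := exists_crossing_neighbors hnbr_a hnbr_b hsum
  obtain ⟨c, hc, hclen⟩ := hp.isPath.exists_isCycle_length_eq_add_one hlen hi hai hbi
  refine ⟨a, c, hc.isHamiltonianCycle_of_forall_mem_support fun x ↦ ?_⟩
  by_contra hx
  have hG : G.Preconnected := preconnected_of_card_lt_degree_add_degree fun u v ↦ by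
    have := hdeg u
    have := hdeg v
    omega
  obtain ⟨u, v, q, hq, hqlen⟩ := hc.exists_isPath_length_eq_of_notMem_support hG hx
  have := hp.length_le q hq
  omega
end

section
/- Let G be a connected n-vertex graph and B ⊆ V(G). Then G contains a simple path of length at least min{n − |B| − 1, 2δ(G − B)}. -/
/-!
Let `H = G − B` and `δ = δ(G − B)`.

If `V ∖ B` lies in a single component of `H`, take a longest path `P` of `H` in that component
and suppose it is shorter than both `n − |B| − 1` and `2δ`. Its two ends have all their `≥ δ`
neighbours on `P`, so by pigeonhole there is an edge `xᵢxᵢ₊₁` of `P` with `x₀ ~ xᵢ₊₁` and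
`xₗ ~ xᵢ`; these crossing chords close `V(P)` into a cycle. Some vertex of the component
lies off `P` and is adjacent to that cycle, and opening the cycle at its neighbour yields a longer
path.

Otherwise, a shortest `G`-path between two components of `H` has all inner vertices in `B`. The
far end of a longest `H`-path ending at a given vertex has all its neighbours on that path, so such
a path has length `≥ δ`; attaching one at each end of the shortest path gives length `> 2δ`.
-/

/-- `deltaB G B` is the minimum degree of the induced subgraph `G - B`. -/
noncomputable def deltaB {V : Type*} [Fintype V] [DecidableEq V] (G : SimpleGraph V)
    [DecidableRel G.Adj] (B : Finset V) : ℕ :=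
  sInf { d : ℕ | ∃ v, v ∉ B ∧ ((G.neighborFinset v).filter (· ∉ B)).card = d }

open scoped List Finset

namespace SimpleGraph

variable {V : Type*} {G : SimpleGraph V}

namespace Walk

theorem degree_le_length_of_forall_adj_mem_support {u v : V} {p : G.Walk u v}
    [Fintype (G.neighborSet u)] (h : ∀ x, G.Adj u x → x ∈ p.support) :
    G.degree u ≤ p.length := by
  classical
  have hsub : G.neighborFinset u ⊆ p.support.tail.toFinset := fun x hx => by
    rw [mem_neighborFinset] at hx
    have hx' := h x hx
    rw [← p.cons_tail_support] at hx'
    exact List.mem_toFinset.mpr (List.mem_of_ne_of_mem hx.ne.symm hx')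
  calc G.degree u = #(G.neighborFinset u) := (card_neighborFinset_eq_degree G u).symm
    _ ≤ #p.support.tail.toFinset := Finset.card_le_card hsub
    _ ≤ p.support.tail.length := List.toFinset_card_le _
    _ = p.length := by simp

theorem exists_mem_darts_adj_snd_adj_fst {u v : V} {p : G.Walk u v}
    [Fintype (G.neighborSet u)] [Fintype (G.neighborSet v)]
    (hu : ∀ x, G.Adj u x → x ∈ p.support) (hv : ∀ x, G.Adj v x → x ∈ p.support)
    (hlt : p.length < G.degree u + G.degree v) :
    ∃ d ∈ p.darts, G.Adj u d.snd ∧ G.Adj v d.fst := by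
  classical
  set D := p.darts.toFinset
  have hsnd : G.neighborFinset u ⊆ (D.filter (G.Adj u ·.snd)).image (·.snd) := fun x hx => by
    rw [mem_neighborFinset] at hx
    have hx' := hu x hx
    rw [← p.cons_tail_support, ← map_snd_darts] at hx'
    obtain ⟨d, hd, rfl⟩ := List.mem_map.mp (List.mem_of_ne_of_mem hx.ne.symm hx')
    exact Finset.mem_image_of_mem _ (Finset.mem_filter.mpr ⟨List.mem_toFinset.mpr hd, hx⟩)
  have hfst : G.neighborFinset v ⊆ (D.filter (G.Adj v ·.fst)).image (·.fst) := fun x hx => by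
    rw [mem_neighborFinset] at hx
    have hx' := hv x hx
    rw [← dropLast_support_concat, List.mem_append, List.mem_singleton,
      ← map_fst_darts] at hx'
    obtain ⟨d, hd, rfl⟩ := List.mem_map.mp (hx'.resolve_right hx.ne.symm)
    exact Finset.mem_image_of_mem _ (Finset.mem_filter.mpr ⟨List.mem_toFinset.mpr hd, hx⟩)
  have hcard : #D < #(D.filter (G.Adj u ·.snd)) + #(D.filter (G.Adj v ·.fst)) :=
    calc #D ≤ p.darts.length := List.toFinset_card_le _
      _ < G.degree u + G.degree v := by rwa [length_darts]
      _ ≤ _ := by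
        rw [← card_neighborFinset_eq_degree, ← card_neighborFinset_eq_degree]
        exact add_le_add ((Finset.card_le_card hsnd).trans Finset.card_image_le)
          ((Finset.card_le_card hfst).trans Finset.card_image_le)
  obtain ⟨d, hd⟩ := Finset.inter_nonempty_of_card_lt_card_add_card
    (Finset.filter_subset _ _) (Finset.filter_subset _ _) hcard
  simp only [Finset.mem_inter, Finset.mem_filter, D, List.mem_toFinset] at hd
  exact ⟨d, hd.1.1, hd.1.2, hd.2.2⟩

theorem exists_eq_append_cons_of_mem_darts {u v : V} {p : G.Walk u v} {d : G.Dart}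
    (hd : d ∈ p.darts) :
    ∃ (q : G.Walk u d.fst) (r : G.Walk d.snd v), p = q.append (cons d.adj r) := by
  induction p with
  | nil => simp at hd
  | cons h p ih =>
    rw [darts_cons, List.mem_cons] at hd
    rcases hd with rfl | hd
    · exact ⟨nil, p, rfl⟩
    · obtain ⟨q, r, rfl⟩ := ih hd
      exact ⟨cons h q, r, rfl⟩

theorem exists_closed_walk_of_mem_darts {u v : V} {p : G.Walk u v} {d : G.Dart}
    (hd : d ∈ p.darts) (hu : G.Adj u d.snd) (hv : G.Adj v d.fst) :
    ∃ c : G.Walk u u, c.length = p.length + 1 ∧ c.support.tail ~ p.support := by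
  obtain ⟨q, r, rfl⟩ := exists_eq_append_cons_of_mem_darts hd
  refine ⟨q.append (cons hv.symm (r.reverse.concat hu.symm)), ?_, ?_⟩
  · simp only [length_append, length_cons, length_concat, length_reverse]
    omega
  · simp only [support_append, support_cons, support_concat, support_reverse, List.tail_cons]
    rw [← q.cons_tail_support]
    simp only [List.cons_append, List.tail_cons]
    exact (((List.perm_append_singleton _ _).trans ((List.reverse_perm _).cons u)).append_left
      _).trans List.perm_middle

theorem exists_isPath_support_perm_of_nodup_tail [DecidableEq V] {v y : V} {c : G.Walk v v}
    (hc : ¬c.Nil) (hnodup : c.support.tail.Nodup) (hy : y ∈ c.support) :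
    ∃ (z : V) (q : G.Walk y z), q.IsPath ∧ q.length + 1 = c.length ∧
      q.support ~ c.support.tail := by
  set r := c.rotate y hy
  have hr : ¬r.Nil := by simpa [r] using hc
  have hperm : r.dropLast.support ~ c.support.tail :=
    (r.support_tail_perm_support_dropLast.symm.trans (by rw [support_tail_of_not_nil _ hr])).trans
      (c.support_rotate y hy).perm
  refine ⟨_, r.dropLast, ?_, ?_, hperm⟩
  · exact isPath_def _ |>.mpr (hperm.nodup_iff.mpr hnodup)
  · rw [length_dropLast_add_one hr, length_rotate]

theorem IsPath.exists_isPath_support_perm_of_mem_darts [DecidableEq V] {u v y : V}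
    {p : G.Walk u v} (hp : p.IsPath) {d : G.Dart} (hd : d ∈ p.darts) (hu : G.Adj u d.snd)
    (hv : G.Adj v d.fst) (hy : y ∈ p.support) :
    ∃ (z : V) (q : G.Walk y z), q.IsPath ∧ q.length = p.length ∧ q.support ~ p.support := by
  obtain ⟨c, hclen, hcperm⟩ := exists_closed_walk_of_mem_darts hd hu hv
  have hyc : y ∈ c.support := by
    rw [← c.cons_tail_support]
    exact List.mem_cons_of_mem _ (hcperm.mem_iff.mpr hy)
  obtain ⟨z, q, hq, hqlen, hqperm⟩ := c.exists_isPath_support_perm_of_nodup_tail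
    (by simp [← length_eq_zero_iff, hclen]) (hcperm.nodup_iff.mpr hp.support_nodup) hyc
  exact ⟨z, q, hq, by omega, hqperm.trans hcperm⟩

theorem IsPath.append_of_forall_mem_support {u v w : V} {p : G.Walk u v} {q : G.Walk v w}
    (hp : p.IsPath) (hq : q.IsPath) (h : ∀ x ∈ p.support, x ∈ q.support → x = v) :
    (p.append q).IsPath := by
  rw [isPath_def, support_append]
  have hq' := hq.support_nodup
  rw [← cons_tail_support] at hq'
  refine hp.support_nodup.append (List.nodup_cons.mp hq').2 fun x hxp hxq => ?_
  exact (List.nodup_cons.mp hq').1 (h x hxp (List.mem_of_mem_tail hxq) ▸ hxq)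

end Walk

theorem exists_longest_isPath [Fintype V] (P : ∀ u v : V, G.Walk u v → Prop)
    (h : ∃ (u v : V) (p : G.Walk u v), p.IsPath ∧ P u v p) :
    ∃ (u v : V) (p : G.Walk u v), p.IsPath ∧ P u v p ∧
      ∀ u' v' (p' : G.Walk u' v'), p'.IsPath → P u' v' p' → p'.length ≤ p.length := by
  set S := {n | ∃ (u v : V) (p : G.Walk u v), p.IsPath ∧ P u v p ∧ p.length = n}
  have hne : S.Nonempty := by
    obtain ⟨u, v, p, hp, hP⟩ := h
    exact ⟨_, u, v, p, hp, hP, rfl⟩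
  have hbdd : BddAbove S := ⟨Fintype.card V, fun _ ⟨_, _, _, hp, _, hn⟩ => hn ▸ hp.length_lt.le⟩
  obtain ⟨u, v, p, hp, hP, hlen⟩ := Nat.sSup_mem hne hbdd
  exact ⟨u, v, p, hp, hP, fun u' v' p' hp' hP' =>
    hlen ▸ le_csSup hbdd ⟨u', v', p', hp', hP', rfl⟩⟩

theorem exists_isPath_to_degree_le_length [Fintype V] [DecidableRel G.Adj] (u : V) {δ : ℕ}
    (hdeg : ∀ x, G.Reachable x u → δ ≤ G.degree x) :
    ∃ (w : V) (p : G.Walk w u), p.IsPath ∧ δ ≤ p.length := by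
  obtain ⟨w, _, p, hp, rfl, hmax⟩ :=
    exists_longest_isPath (fun _ v _ => v = u) ⟨u, u, .nil, .nil, rfl⟩
  refine ⟨w, p, hp, (hdeg w ⟨p⟩).trans
    (p.degree_le_length_of_forall_adj_mem_support fun x hx => ?_)⟩
  by_contra hxp
  have := hmax _ _ (.cons hx.symm p) (hp.cons hxp) rfl
  simp at this

theorem exists_isPath_min_card_sub_one_two_mul_le_length [Fintype V] [DecidableRel G.Adj]
    {a : V} {δ : ℕ} (hdeg : ∀ x, G.Reachable a x → δ ≤ G.degree x) (s : Finset V)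
    (hs : ∀ x ∈ s, G.Reachable a x) :
    ∃ (u v : V) (p : G.Walk u v), p.IsPath ∧ min (#s - 1) (2 * δ) ≤ p.length := by
  classical
  obtain ⟨u, w, P, hP, hau, hmax⟩ :=
    exists_longest_isPath (fun u _ _ => G.Reachable a u) ⟨a, a, .nil, .nil, .refl a⟩
  refine ⟨u, w, P, hP, ?_⟩
  by_contra! hlt
  rw [lt_min_iff] at hlt
  have haw : G.Reachable a w := hau.trans ⟨P⟩
  have hu : ∀ x, G.Adj u x → x ∈ P.support := fun x hx => by
    by_contra hxP
    have := hmax _ _ (.cons hx.symm P) (hP.cons hxP) (hau.trans hx.reachable)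
    simp at this
  have hw : ∀ x, G.Adj w x → x ∈ P.support := fun x hx => by
    by_contra hxP
    have := hmax _ _ (.cons hx.symm P.reverse) (hP.reverse.cons (by simpa using hxP))
      (haw.trans hx.reachable)
    simp at this
  obtain ⟨d, hd, hdu, hdw⟩ := P.exists_mem_darts_adj_snd_adj_fst hu hw
    (by linarith [hdeg u hau, hdeg w haw])
  obtain ⟨x, hxs, hxP⟩ : ∃ x ∈ s, x ∉ P.support := by
    by_contra! hsP
    have := (Finset.card_le_card fun x hx => List.mem_toFinset.mpr (hsP x hx)).trans
      (List.toFinset_card_le P.support)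
    simp only [Walk.length_support] at this
    omega
  obtain ⟨e, -, heP, hexP⟩ := (hau.symm.trans (hs x hxs)).some.exists_boundary_dart
    {v | v ∈ P.support} P.start_mem_support hxP
  obtain ⟨z, W, hW, hWlen, hWperm⟩ :=
    hP.exists_isPath_support_perm_of_mem_darts hd hdu hdw heP
  have := hmax _ _ (.cons e.adj.symm W) (hW.cons (by rwa [hWperm.mem_iff]))
    ((hau.trans ⟨P.takeUntil _ heP⟩).trans e.adj.reachable)
  simp only [Walk.length_cons] at this
  omega

/-- `G − B` as a graph on all of `V`: the vertices of `B` stay, but become isolated. -/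
def removeVerts (G : SimpleGraph V) (B : Finset V) : SimpleGraph V where
  Adj x y := x ∉ B ∧ y ∉ B ∧ G.Adj x y
  symm := ⟨fun _ _ h => ⟨h.2.1, h.1, h.2.2.symm⟩⟩
  loopless := ⟨fun x h => G.loopless.irrefl x h.2.2⟩

instance [DecidableEq V] [DecidableRel G.Adj] (B : Finset V) :
    DecidableRel (G.removeVerts B).Adj :=
  fun x y => inferInstanceAs (Decidable (x ∉ B ∧ y ∉ B ∧ G.Adj x y))

@[simp]
theorem removeVerts_adj {B : Finset V} {x y : V} :
    (G.removeVerts B).Adj x y ↔ x ∉ B ∧ y ∉ B ∧ G.Adj x y :=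
  Iff.rfl

theorem removeVerts_le (B : Finset V) : G.removeVerts B ≤ G :=
  fun _ _ h => (removeVerts_adj.mp h).2.2

theorem notMem_of_reachable_removeVerts {B : Finset V} {x y : V}
    (h : (G.removeVerts B).Reachable x y) (hy : y ∉ B) : x ∉ B := by
  obtain ⟨p⟩ := h
  cases p with
  | nil => exact hy
  | cons h _ => exact (removeVerts_adj.mp h).1

theorem deltaB_le_degree_removeVerts [Fintype V] [DecidableEq V] [DecidableRel G.Adj]
    {B : Finset V} {x : V} (hx : x ∉ B) : deltaB G B ≤ (G.removeVerts B).degree x := by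
  rw [← card_neighborFinset_eq_degree]
  refine Nat.sInf_le ⟨x, hx, congrArg Finset.card ?_⟩
  ext y
  simp [hx, and_comm]

theorem exists_isPath_between_components_removeVerts (hconn : G.Connected) {B : Finset V}
    {a b : V} (ha : a ∉ B) (hb : b ∉ B) (hab : ¬(G.removeVerts B).Reachable a b) :
    ∃ (u u' : V) (q : G.Walk u u'), q.IsPath ∧ u ∉ B ∧ u' ∉ B ∧
      ¬(G.removeVerts B).Reachable u u' ∧ ∀ z ∈ q.support, z = u ∨ z = u' ∨ z ∈ B := by
  classical
  -- `u`, `u'` at minimal `G`-distance: an inner vertex outside `B` would give a closer pair.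
  have hex : ∃ n, ∃ (u u' : V) (q : G.Walk u u'), u ∉ B ∧ u' ∉ B ∧
      ¬(G.removeVerts B).Reachable u u' ∧ q.length = n :=
    ⟨_, a, b, (hconn a b).some, ha, hb, hab, rfl⟩
  obtain ⟨u, u', q, hu, hu', huu', hqlen⟩ := Nat.find_spec hex
  refine ⟨u, u', q.bypass, q.bypass_isPath, hu, hu', huu', fun z hz => ?_⟩
  replace hz := q.support_bypass_subset_support hz
  by_contra! hz'
  obtain ⟨hzu, hzu', hzB⟩ := hz'
  by_cases huz : (G.removeVerts B).Reachable u z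
  · exact Nat.find_min hex (hqlen ▸ Walk.length_dropUntil_lt_length hz hzu)
      ⟨z, u', _, hzB, hu', fun h => huu' (huz.trans h), rfl⟩
  · exact Nat.find_min hex (hqlen ▸ Walk.length_takeUntil_lt_length hz hzu')
      ⟨u, z, _, hu, hzB, huz, rfl⟩

theorem exists_isPath_two_mul_lt_length_of_not_reachable_removeVerts [Fintype V]
    [DecidableEq V] [DecidableRel G.Adj] (hconn : G.Connected) {B : Finset V} {δ : ℕ}
    (hdeg : ∀ x ∉ B, δ ≤ (G.removeVerts B).degree x) {a b : V} (ha : a ∉ B) (hb : b ∉ B)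
    (hab : ¬(G.removeVerts B).Reachable a b) :
    ∃ (u v : V) (p : G.Walk u v), p.IsPath ∧ 2 * δ < p.length := by
  set H := G.removeVerts B
  obtain ⟨u, u', q, hq, hu, hu', huu', hqB⟩ :=
    exists_isPath_between_components_removeVerts hconn ha hb hab
  have hdeg' {y : V} (hy : y ∉ B) (x : V) (hxy : H.Reachable x y) : δ ≤ H.degree x :=
    hdeg x (notMem_of_reachable_removeVerts hxy hy)
  obtain ⟨w, p, hp, hplen⟩ := exists_isPath_to_degree_le_length u (hdeg' hu)
  obtain ⟨w', p', hp', hp'len⟩ := exists_isPath_to_degree_le_length u' (hdeg' hu')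
  have hpu (x : V) (hx : x ∈ p.support) : H.Reachable x u := ⟨p.dropUntil x hx⟩
  have hp'u' (x : V) (hx : x ∈ p'.support) : H.Reachable x u' := ⟨p'.dropUntil x hx⟩
  have hqp' : (q.append (p'.reverse.mapLe (removeVerts_le B))).IsPath := by
    refine hq.append_of_forall_mem_support (hp'.reverse.mapLe _) fun x hxq hxp' => ?_
    rw [Walk.support_mapLe_eq_support, Walk.support_reverse, List.mem_reverse] at hxp'
    rcases hqB x hxq with rfl | rfl | hxB
    · exact absurd (hp'u' x hxp') huu'
    · rfl
    · exact absurd hxB (notMem_of_reachable_removeVerts (hp'u' x hxp') hu')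
  refine ⟨w, w', (p.mapLe (removeVerts_le B)).append (q.append (p'.reverse.mapLe _)),
    (hp.mapLe _).append_of_forall_mem_support hqp' fun x hxp hx => ?_, ?_⟩
  · rw [Walk.support_mapLe_eq_support] at hxp
    rw [Walk.mem_support_append_iff, Walk.support_mapLe_eq_support, Walk.support_reverse,
      List.mem_reverse] at hx
    rcases hx with hxq | hxp'
    · rcases hqB x hxq with rfl | rfl | hxB
      · rfl
      · exact absurd (hpu x hxp).symm huu'
      · exact absurd hxB (notMem_of_reachable_removeVerts (hpu x hxp) hu)
    · exact absurd ((hpu x hxp).symm.trans (hp'u' x hxp')) huu'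
  · have hq0 : q.length ≠ 0 := fun h => huu' (Walk.eq_of_length_eq_zero h ▸ .refl u)
    simp only [Walk.length_append, Walk.length_mapLe, Walk.length_reverse]
    omega

end SimpleGraph

open SimpleGraph in
/-- Let `G` be a connected `n`-vertex graph and `B ⊆ V(G)` with `V(G) \ B` nonempty.
Then `G` contains a simple path of length at least `min {n − |B| − 1, 2δ(G − B)}`. -/
theorem stmt_4 {V : Type*} [Fintype V] [DecidableEq V] (G : SimpleGraph V)
    [DecidableRel G.Adj] (B : Finset V) (hconn : G.Connected)
    (hB : (Bᶜ : Finset V).Nonempty) :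
    ∃ (u w : V) (p : G.Walk u w), p.IsPath ∧
      min (Fintype.card V - B.card - 1) (2 * deltaB G B) ≤ p.length := by
  obtain ⟨a, ha⟩ := hB
  rw [Finset.mem_compl] at ha
  have hdeg (x : V) (hx : x ∉ B) : deltaB G B ≤ (G.removeVerts B).degree x :=
    deltaB_le_degree_removeVerts hx
  by_cases hconnB : ∀ b ∉ B, (G.removeVerts B).Reachable a b
  · obtain ⟨u, w, p, hp, hlen⟩ := exists_isPath_min_card_sub_one_two_mul_le_length
      (fun x hx => hdeg x (notMem_of_reachable_removeVerts hx.symm ha)) Bᶜ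
      (fun x hx => hconnB x (Finset.mem_compl.mp hx))
    refine ⟨u, w, p.mapLe (removeVerts_le B), hp.mapLe _, ?_⟩
    rwa [Walk.length_mapLe, ← Finset.card_compl]
  · push Not at hconnB
    obtain ⟨b, hb, hab⟩ := hconnB
    obtain ⟨u, w, p, hp, hlen⟩ :=
      exists_isPath_two_mul_lt_length_of_not_reachable_removeVerts hconn hdeg ha hb hab
    exact ⟨u, w, p, hp, (min_le_right _ _).trans hlen.le⟩
end

section
/- Let G be a graph with B ⊆ V(G) and a vertex cover S ⊇ B with |S| = δ(G−B) + p where 0 < p < δ(G−B)/8. Then for any X ⊆ V(G)\S with |X| ≥ δ(G−B) − 3p, at most 2p vertices of S have fewer than 2p neighbors in X. -/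
open Finset

namespace SimpleGraph

variable {V : Type*} [Fintype V] [DecidableEq V] (G : SimpleGraph V) [DecidableRel G.Adj]

theorem deltaB_le_card_filter_notMem {B : Finset V} {x : V} (hx : x ∉ B) :
    deltaB G B ≤ #{y ∈ G.neighborFinset x | y ∉ B} :=
  Nat.sInf_le ⟨x, hx, rfl⟩

theorem card_filter_not_adj_le_of_notMem_cover {B S : Finset V} (hBS : B ⊆ S)
    (hvc : ∀ u v, G.Adj u v → u ∈ S ∨ v ∈ S) {x : V} (hx : x ∉ S) :
    #{v ∈ S | ¬G.Adj x v} ≤ #S - deltaB G B := by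
  have hdeg : deltaB G B ≤ #{v ∈ S | G.Adj x v} := by
    refine (G.deltaB_le_card_filter_notMem fun hxB => hx (hBS hxB)).trans (card_le_card ?_)
    intro y hy
    rw [mem_filter, mem_neighborFinset] at hy
    exact mem_filter.2 ⟨(hvc x y hy.1).resolve_left hx, hy.1⟩
  have hsplit := card_filter_add_card_filter_not (s := S) fun v => G.Adj x v
  omega

theorem card_filter_mem_neighborFinset (X : Finset V) (v : V) :
    #{w ∈ G.neighborFinset v | w ∈ X} = #{w ∈ X | G.Adj w v} := by
  congr 1
  ext w
  simp only [mem_filter, mem_neighborFinset, G.adj_comm v w, and_comm]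

end SimpleGraph

theorem Nat.le_two_mul_of_mul_sub_le {m p t : ℕ} (hm : 5 * p < m)
    (h : m * (t - p) ≤ t * (2 * p - 1)) : t ≤ 2 * p := by
  by_contra! ht
  obtain ⟨q, rfl⟩ : ∃ q, t = p + q := ⟨t - p, by omega⟩
  obtain ⟨r, rfl⟩ : ∃ r, m = 5 * p + 1 + r := ⟨m - (5 * p + 1), by omega⟩
  rw [Nat.add_sub_cancel_left] at h
  have hle : (5 * p + 1 + r) * q ≤ (p + q) * (2 * p) := h.trans (Nat.mul_le_mul_left _ (by omega))
  nlinarith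

theorem stmt_8_general {V : Type*} [Fintype V] [DecidableEq V] (G : SimpleGraph V)
    [DecidableRel G.Adj] (B S : Finset V) (p : ℕ) (hBS : B ⊆ S)
    (hvc : ∀ u v, G.Adj u v → u ∈ S ∨ v ∈ S)
    (hScard : S.card = deltaB G B + p) (hp8 : 8 * p < deltaB G B)
    (X : Finset V) (hX : X ⊆ Sᶜ) (hXcard : deltaB G B - 3 * p ≤ X.card) :
    (S.filter fun v => ((G.neighborFinset v).filter (· ∈ X)).card < 2 * p).card ≤ 2 * p := by
  set T := S.filter fun v => ((G.neighborFinset v).filter (· ∈ X)).card < 2 * p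
  have hmany : ∀ x ∈ X, #T - p ≤ #(T.bipartiteAbove G.Adj x) := by
    intro x hx
    have hmiss := G.card_filter_not_adj_le_of_notMem_cover hBS hvc (mem_compl.1 (hX hx))
    have hsub : #{v ∈ T | ¬G.Adj x v} ≤ #{v ∈ S | ¬G.Adj x v} :=
      card_le_card (filter_subset_filter _ (filter_subset _ S))
    have hsplit := card_filter_add_card_filter_not (s := T) fun v => G.Adj x v
    rw [bipartiteAbove]
    omega
  have hfew : ∀ v ∈ T, #(X.bipartiteBelow G.Adj v) ≤ 2 * p - 1 := by
    intro v hv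
    have hlow := (mem_filter.1 hv).2
    rw [G.card_filter_mem_neighborFinset] at hlow
    rw [bipartiteBelow]
    omega
  exact Nat.le_two_mul_of_mul_sub_le (by omega) (card_mul_le_card_mul _ hmany hfew)

/-- Let `G` be a graph with `B ⊆ V(G)` and a vertex cover `S ⊇ B` with
`|S| = δ(G−B) + p` where `0 < p < δ(G−B)/8`. Then for any `X ⊆ V(G)\S` with
`|X| ≥ δ(G−B) − 3p`, at most `2p` vertices of `S` have fewer than `2p` neighbors in `X`. -/
theorem stmt_8 {V : Type*} [Fintype V] [DecidableEq V] (G : SimpleGraph V)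
    [DecidableRel G.Adj] (B S : Finset V) (p : ℕ) (hBS : B ⊆ S)
    (hvc : ∀ u v, G.Adj u v → u ∈ S ∨ v ∈ S)
    (hScard : S.card = deltaB G B + p) (hp : 0 < p) (hp8 : 8 * p < deltaB G B)
    (X : Finset V) (hX : X ⊆ Sᶜ) (hXcard : deltaB G B - 3 * p ≤ X.card) :
    (S.filter fun v => ((G.neighborFinset v).filter (· ∈ X)).card < 2 * p).card ≤ 2 * p :=
  stmt_8_general G B S p hBS hvc hScard hp8 X hX hXcard
end

section
/- Let G be a graph, B ⊆ V(G), and S ⊇ B a vertex cover of G with |S| = δ(G−B) + p for some p ≥ 0. Let k ≥ 0 be an integer and X ⊆ I = V(G)\S with |X| = δ(G−B) − 3p. If G has a cycle C of length 2δ(G−B) + k, then G has a cycle C' of the same length 2δ(G−B) + k, containing all vertices of X, and satisfying V(C) ∩ S = V(C') ∩ S. -/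
open Finset Function

lemma Finset.exists_injective_mem_of_card_le {ι α : Type*} [Fintype ι] [DecidableEq α]
    (r : ι → Finset α) (h : ∀ i, Fintype.card ι ≤ #(r i)) :
    ∃ g : ι → α, Injective g ∧ ∀ i, g i ∈ r i := by
  refine (all_card_le_biUnion_card_iff_exists_injective r).mp fun s => ?_
  obtain rfl | ⟨i, hi⟩ := s.eq_empty_or_nonempty
  · simp
  · calc #s ≤ Fintype.card ι := card_le_univ s
      _ ≤ #(r i) := h i
      _ ≤ #(s.biUnion r) := card_le_card (subset_biUnion_of_mem r hi)

lemma Equiv.Perm.exists_apply_eq_of_disjoint_range {ι α : Type*} {e g : ι → α}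
    (he : Injective e) (hg : Injective g) (hdisj : ∀ i j, e i ≠ g j) :
    ∃ σ : Equiv.Perm α, (∀ i, σ (g i) = e i) ∧
      ∀ y, y ∉ Set.range e → y ∉ Set.range g → σ y = y := by
  classical
  have hinj : Injective (Sum.elim e g) := he.sumElim hg hdisj
  let τ : Equiv.Perm (ι ⊕ ι) := Equiv.sumComm ι ι
  let ψ := Equiv.ofInjective _ hinj
  refine ⟨τ.extendDomain ψ, fun i => τ.extendDomain_apply_image ψ (.inr i),
    fun y hye hyg => τ.extendDomain_apply_not_subtype ψ ?_⟩
  rintro ⟨i | i, rfl⟩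
  exacts [hye ⟨i, rfl⟩, hyg ⟨i, rfl⟩]

namespace SimpleGraph.Walk

variable {V : Type*} {G : SimpleGraph V} {u : V}

lemma IsCycle.length_le_card_support_toFinset [DecidableEq V] {c : G.Walk u u}
    (hc : c.IsCycle) : c.length ≤ #c.support.toFinset := by
  calc c.length = #c.support.tail.toFinset := by
        rw [List.toFinset_card_of_nodup hc.support_nodup, List.length_tail, length_support]; rfl
    _ ≤ #c.support.toFinset := card_le_card fun y hy => by
        simpa using List.mem_of_mem_tail (List.mem_toFinset.mp hy)

lemma IsCycle.card_filter_mem_edges_le_two [DecidableEq V] {c : G.Walk u u} (hc : c.IsCycle)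
    (z : V) (A : Finset V) : #{y ∈ A | s(z, y) ∈ c.edges} ≤ 2 := by
  rw [← Set.ncard_coe_finset]
  have hsub : ↑{y ∈ A | s(z, y) ∈ c.edges} ⊆ c.toSubgraph.neighborSet z :=
    fun y hy => adj_toSubgraph_iff_mem_edges.mpr (mem_filter.mp hy).2
  refine (Set.ncard_le_ncard hsub (finite_neighborSet_toSubgraph c)).trans ?_
  by_cases hz : z ∈ c.support
  · exact (hc.ncard_neighborSet_toSubgraph_eq_two hz).le
  · have : c.toSubgraph.neighborSet z = ∅ :=
      Set.eq_empty_of_forall_notMem fun y hy => hz (mem_support_of_adj_toSubgraph hy)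
    simp [this]

lemma IsCycle.exists_isCycle_support_eq_map {c : G.Walk u u} (hc : c.IsCycle) {f : V → V}
    (hf : Injective f) (hadj : ∀ a b, s(a, b) ∈ c.edges → G.Adj (f a) (f b)) :
    ∃ c' : G.Walk (f u) (f u), c'.IsCycle ∧ c'.length = c.length ∧
      c'.support = c.support.map f := by
  let H := SimpleGraph.fromEdgeSet {e | e ∈ c.edges}
  let φ : H →g G := ⟨f, fun h => hadj _ _ h.1⟩
  have hH : ∀ e ∈ c.edges, e ∈ H.edgeSet := fun e he => by
    rw [edgeSet_fromEdgeSet]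
    exact ⟨he, G.not_isDiag_of_mem_edgeSet (c.edges_subset_edgeSet he)⟩
  refine ⟨(c.transfer H hH).map φ, (hc.transfer hH).map hf, by simp, ?_⟩
  rw [support_map, support_transfer]
  rfl

lemma IsCycle.exists_isCycle_replace {ι : Type*} {c : G.Walk u u} (hc : c.IsCycle)
    {e g : ι → V} (he : Injective e) (hg : Injective g) (he_supp : ∀ i, e i ∉ c.support)
    (hg_supp : ∀ i, g i ∈ c.support) (hg_indep : ∀ i j, s(g i, g j) ∉ c.edges)
    (hadj : ∀ i z, s(g i, z) ∈ c.edges → G.Adj (e i) z) :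
    ∃ (w : V) (c' : G.Walk w w), c'.IsCycle ∧ c'.length = c.length ∧
      ∀ y, y ∈ c'.support ↔
        (y ∈ c.support ∧ y ∉ Set.range g) ∨ y ∈ Set.range e := by
  obtain ⟨σ, hσg, hσ⟩ := Equiv.Perm.exists_apply_eq_of_disjoint_range he hg
    fun i j h => he_supp i (h ▸ hg_supp j)
  have hfix : ∀ y ∈ c.support, y ∉ Set.range g → σ y = y :=
    fun y hy hyg => hσ y (by rintro ⟨i, rfl⟩; exact he_supp i hy) hyg
  have hadj' : ∀ a b, s(a, b) ∈ c.edges → G.Adj (σ a) (σ b) := by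
    intro a b hab
    have ha := c.fst_mem_support_of_mem_edges hab
    have hb := c.snd_mem_support_of_mem_edges hab
    by_cases hag : a ∈ Set.range g <;> by_cases hbg : b ∈ Set.range g
    · obtain ⟨i, rfl⟩ := hag
      obtain ⟨j, rfl⟩ := hbg
      exact absurd hab (hg_indep i j)
    · obtain ⟨i, rfl⟩ := hag
      rw [hσg, hfix b hb hbg]
      exact hadj i b hab
    · obtain ⟨j, rfl⟩ := hbg
      rw [hσg, hfix a ha hag]
      exact (hadj j a (Sym2.eq_swap ▸ hab)).symm
    · rw [hfix a ha hag, hfix b hb hbg]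
      exact c.adj_of_mem_edges hab
  obtain ⟨c', hc', hlen, hsupp⟩ := hc.exists_isCycle_support_eq_map σ.injective hadj'
  refine ⟨_, c', hc', hlen, fun y => ?_⟩
  rw [hsupp, List.mem_map]
  constructor
  · rintro ⟨a, ha, rfl⟩
    by_cases hag : a ∈ Set.range g
    · obtain ⟨i, rfl⟩ := hag
      exact Or.inr ⟨i, (hσg i).symm⟩
    · rw [hfix a ha hag]
      exact Or.inl ⟨ha, hag⟩
  · rintro (⟨hy, hyg⟩ | ⟨i, rfl⟩)
    · exact ⟨y, hy, hfix y hy hyg⟩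
    · exact ⟨g i, hg_supp i, hσg i⟩

lemma IsCycle.card_le_card_filter_add_two_mul [Fintype V] [DecidableEq V] [DecidableRel G.Adj]
    {c : G.Walk u u} (hc : c.IsCycle) {S A : Finset V}
    (hvc : ∀ a b, G.Adj a b → a ∈ S ∨ b ∈ S) (hA : ∀ y ∈ A, y ∉ S) (x : V) :
    #A ≤ #{y ∈ A | ∀ z, s(y, z) ∈ c.edges → G.Adj x z} +
      2 * #{z ∈ S | ¬ G.Adj x z} := by
  have hbad : {y ∈ A | ¬ ∀ z, s(y, z) ∈ c.edges → G.Adj x z} ⊆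
      {z ∈ S | ¬ G.Adj x z}.biUnion fun z => {y ∈ A | s(z, y) ∈ c.edges} := by
    intro y hy
    obtain ⟨hyA, hy⟩ := mem_filter.mp hy
    push Not at hy
    obtain ⟨z, hyz, hxz⟩ := hy
    have hzS : z ∈ S := (hvc y z (c.adj_of_mem_edges hyz)).resolve_left (hA y hyA)
    exact mem_biUnion.mpr
      ⟨z, mem_filter.mpr ⟨hzS, hxz⟩, mem_filter.mpr ⟨hyA, Sym2.eq_swap ▸ hyz⟩⟩
  calc #A = #{y ∈ A | ∀ z, s(y, z) ∈ c.edges → G.Adj x z}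
        + #{y ∈ A | ¬ ∀ z, s(y, z) ∈ c.edges → G.Adj x z} :=
        (card_filter_add_card_filter_not _).symm
    _ ≤ _ := by
      gcongr
      refine (card_le_card hbad).trans ?_
      rw [mul_comm]
      exact card_biUnion_le_card_mul _ _ 2 fun z _ => hc.card_filter_mem_edges_le_two z A

end SimpleGraph.Walk

open SimpleGraph

section MinDegree

variable {V : Type*} [Fintype V] [DecidableEq V] {G : SimpleGraph V} [DecidableRel G.Adj]
  {B S : Finset V}

lemma deltaB_le_card_filter_neighborFinset {x : V} (hx : x ∉ B) :
    deltaB G B ≤ #{y ∈ G.neighborFinset x | y ∉ B} :=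
  Nat.sInf_le ⟨x, hx, rfl⟩

lemma card_filter_not_adj_add_deltaB_le (hBS : B ⊆ S)
    (hvc : ∀ a b, G.Adj a b → a ∈ S ∨ b ∈ S) {x : V} (hx : x ∉ S) :
    #{z ∈ S | ¬ G.Adj x z} + deltaB G B ≤ #S := by
  have hsub : {y ∈ G.neighborFinset x | y ∉ B} ⊆ {z ∈ S | G.Adj x z} := fun z hz => by
    have hxz : G.Adj x z := (G.mem_neighborFinset x z).mp (mem_filter.mp hz).1
    exact mem_filter.mpr ⟨(hvc x z hxz).resolve_left hx, hxz⟩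
  calc #{z ∈ S | ¬ G.Adj x z} + deltaB G B
      ≤ #{z ∈ S | ¬ G.Adj x z} + #{z ∈ S | G.Adj x z} := by
        gcongr
        exact (deltaB_le_card_filter_neighborFinset fun hxB => hx (hBS hxB)).trans
          (card_le_card hsub)
    _ = #S := by rw [add_comm, card_filter_add_card_filter_not]

-- With `#S = δ + p` and `c.length = 2δ + k`, `hcard` reads `#X + 3p ≤ δ + k`.
lemma card_sdiff_support_le_card_slots {X : Finset V} (hBS : B ⊆ S)
    (hvc : ∀ a b, G.Adj a b → a ∈ S ∨ b ∈ S) {v : V} {c : G.Walk v v} (hc : c.IsCycle)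
    (hcard : #X + 3 * #S ≤ c.length + 2 * deltaB G B) {x : V} (hx : x ∉ S) :
    #(X \ c.support.toFinset) ≤
      #({y ∈ c.support.toFinset \ S | ∀ z, s(y, z) ∈ c.edges → G.Adj x z} \ X) := by
  have hlen := hc.length_le_card_support_toFinset
  have hslots := hc.card_le_card_filter_add_two_mul hvc (A := c.support.toFinset \ S)
    (fun y hy => (mem_sdiff.mp hy).2) x
  have hnonadj := card_filter_not_adj_add_deltaB_le hBS hvc hx
  have hsupp : #c.support.toFinset ≤ #(c.support.toFinset \ S) + #S :=
    card_le_card_sdiff_add_card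
  have hgood := card_sdiff_add_card_inter
    {y ∈ c.support.toFinset \ S | ∀ z, s(y, z) ∈ c.edges → G.Adj x z} X
  have hgoodX :
      #({y ∈ c.support.toFinset \ S | ∀ z, s(y, z) ∈ c.edges → G.Adj x z} ∩ X) ≤
        #(X ∩ c.support.toFinset) := by
    refine card_le_card fun y hy => ?_
    simp only [mem_inter, mem_filter, mem_sdiff] at hy ⊢
    exact ⟨hy.2, hy.1.1.1⟩
  have hX := card_sdiff_add_card_inter X c.support.toFinset
  omega

lemma exists_injective_slot {X : Finset V} (hBS : B ⊆ S)
    (hvc : ∀ a b, G.Adj a b → a ∈ S ∨ b ∈ S) (hXS : ∀ x ∈ X, x ∉ S) {v : V}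
    {c : G.Walk v v} (hc : c.IsCycle) (hcard : #X + 3 * #S ≤ c.length + 2 * deltaB G B) :
    ∃ g : ↥(X \ c.support.toFinset) → V, Injective g ∧ (∀ x, g x ∈ c.support) ∧
      (∀ x, g x ∉ S) ∧ (∀ x, g x ∉ X) ∧
      ∀ x z, s(g x, z) ∈ c.edges → G.Adj x z := by
  obtain ⟨g, hg, hg_slot⟩ := exists_injective_mem_of_card_le
    (fun x : ↥(X \ c.support.toFinset) =>
      {y ∈ c.support.toFinset \ S | ∀ z, s(y, z) ∈ c.edges → G.Adj x z} \ X)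
    fun x => (Fintype.card_coe _).trans_le <|
      card_sdiff_support_le_card_slots hBS hvc hc hcard (hXS x (mem_sdiff.mp x.2).1)
  simp only [mem_sdiff, mem_filter, List.mem_toFinset] at hg_slot
  exact ⟨g, hg, fun x => (hg_slot x).1.1.1, fun x => (hg_slot x).1.1.2, fun x => (hg_slot x).2,
    fun x => (hg_slot x).1.2⟩

end MinDegree

/-- Let `S ⊇ B` be a vertex cover of `G` with `|S| = δ(G−B) + p`, `k ≥ 0`, and
`X ⊆ V(G)\S` with `|X| = δ(G−B) − 3p`. If `G` has a cycle `C` of length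
`2δ(G−B) + k`, then it also has a cycle `C'` of the same length, containing all
vertices of `X`, and with `V(C) ∩ S = V(C') ∩ S`. -/
theorem stmt_9 {V : Type*} [Fintype V] [DecidableEq V] (G : SimpleGraph V)
    [DecidableRel G.Adj] (B S : Finset V) (p k : ℕ) (hBS : B ⊆ S)
    (hvc : ∀ u v, G.Adj u v → u ∈ S ∨ v ∈ S)
    (hScard : S.card = deltaB G B + p)
    (X : Finset V) (hX : X ⊆ Sᶜ)
    (hXcard : (X.card : ℤ) = (deltaB G B : ℤ) - 3 * (p : ℤ))
    (v : V) (c : G.Walk v v) (hc : c.IsCycle)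
    (hlen : c.length = 2 * deltaB G B + k) :
    ∃ (w : V) (c' : G.Walk w w), c'.IsCycle ∧ c'.length = 2 * deltaB G B + k ∧
      (∀ x ∈ X, x ∈ c'.support) ∧
      c.support.toFinset ∩ S = c'.support.toFinset ∩ S := by
  have hXS : ∀ x ∈ X, x ∉ S := fun x hx => mem_compl.mp (hX hx)
  obtain ⟨g, hg, hg_supp, hg_S, hg_X, hg_adj⟩ := exists_injective_slot hBS hvc hXS hc (by omega)
  obtain ⟨w, c', hc', hlen', hsupp'⟩ := hc.exists_isCycle_replace Subtype.val_injective hg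
    (fun x hx => (mem_sdiff.mp x.2).2 (List.mem_toFinset.mpr hx)) hg_supp
    (fun x y hxy => ((hvc _ _ (c.adj_of_mem_edges hxy)).elim (hg_S x) (hg_S y)).elim) hg_adj
  refine ⟨w, c', hc', hlen' ▸ hlen, fun x hx => (hsupp' x).mpr ?_, ?_⟩
  · by_cases hxc : x ∈ c.support
    · exact Or.inl ⟨hxc, by rintro ⟨y, rfl⟩; exact hg_X y hx⟩
    · exact Or.inr ⟨⟨x, mem_sdiff.mpr ⟨hx, by simpa using hxc⟩⟩, rfl⟩
  · ext y
    simp only [mem_inter, List.mem_toFinset, hsupp']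
    constructor
    · rintro ⟨hy, hyS⟩
      exact ⟨Or.inl ⟨hy, by rintro ⟨x, rfl⟩; exact hg_S x hyS⟩, hyS⟩
    · rintro ⟨hy | ⟨x, rfl⟩, hyS⟩
      exacts [⟨hy.1, hyS⟩, absurd hyS (hXS x (mem_sdiff.mp x.2).1)]
end

section
/- Let G be a 2-connected graph with B ⊆ V(G) such that (6/5)·δ(G−B) ≥ |V(G)| and δ(G−B) ≥ 4|B|. Then for any pair of distinct vertices s, t ∈ V(G), every longest (s,t)-path in G contains all vertices of V(G)\B. -/
/-!
Suppose a longest `s`–`t` path `p`, of length `L`, misses a vertex `w ∉ B`. The neighbours of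
`w` occupy no two consecutive vertices of `p`, since `w` could be inserted between them; hence
`2 deg w + L + 2 ≤ 2|V|`, and with `6 δ(G - B) ≥ 5|V|` the path is short: `5 (L + 2) ≤ 2 δ(G - B)`.
Consequently any two vertices of `H = V \ (B ∪ V(p))` have more than `L` common neighbours in
`H`, so they are joined inside `H` by a path of length `L + 2`, built greedily. By
2-connectivity there are two disjoint `V(p)`–`H` paths (a fan from a vertex of `H` to `V(p)`,
rerouted through a second vertex of `H`). Leaving `p` along one of them, crossing `H` by a path
of length `L + 2` and returning along the other replaces a segment of `p` by something longer.
-/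

/-- A graph is 2-connected. -/
def TwoConnected {V : Type*} [Fintype V] (G : SimpleGraph V) : Prop :=
  G.Connected ∧ 3 ≤ Fintype.card V ∧ ∀ v : V, (G.induce ({v}ᶜ : Set V)).Connected

namespace Finset

theorem two_mul_card_le_of_succ_notMem {T : Finset ℕ} {k : ℕ} (hT : T ⊆ range (k + 1))
    (h : ∀ i ∈ T, i + 1 ∉ T) : 2 * #T ≤ k + 2 := by
  have hdisj : Disjoint T (T.image (· + 1)) := Finset.disjoint_left.mpr fun i hi hi' => by
    obtain ⟨j, hj, rfl⟩ := mem_image.mp hi'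
    exact h j hj hi
  have hsub : T ∪ T.image (· + 1) ⊆ range (k + 2) := union_subset
    (hT.trans (range_subset_range.mpr (by omega))) fun i hi => by
      obtain ⟨j, hj, rfl⟩ := mem_image.mp hi
      simpa using mem_range.mp (hT hj)
  calc 2 * #T = #(T ∪ T.image (· + 1)) := by
        rw [card_union_of_disjoint hdisj, card_image_of_injective _ (add_left_injective 1)]
        ring
    _ ≤ k + 2 := by simpa using card_le_card hsub

end Finset

namespace SimpleGraph

variable {V : Type*} {G : SimpleGraph V} {u v w : V}

namespace Walk

theorem exists_eq_append_of_first_mem (W : G.Walk u v) (T : Set V)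
    (h : ∃ x ∈ W.support, x ∈ T) :
    ∃ f ∈ T, ∃ (Q : G.Walk u f) (R : G.Walk f v), W = Q.append R ∧
      ∀ x ∈ Q.support, x ∈ T → x = f := by
  induction W with
  | nil => exact ⟨_, by simpa using h, nil, nil, rfl, by simp⟩
  | @cons a b c hab W ih =>
    by_cases ha : a ∈ T
    · exact ⟨a, ha, nil, cons hab W, rfl, by simp⟩
    · obtain ⟨f, hf, Q, R, rfl, hQ⟩ := ih (by simpa [ha] using h)
      refine ⟨f, hf, cons hab Q, R, rfl, fun x hx hxT => ?_⟩
      rcases List.mem_cons.mp (support_cons hab Q ▸ hx) with rfl | hx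
      · exact absurd hxT ha
      · exact hQ x hx hxT

theorem exists_eq_append_of_last_mem (W : G.Walk u v) (T : Set V)
    (h : ∃ x ∈ W.support, x ∈ T) :
    ∃ z ∈ T, ∃ (Q : G.Walk u z) (R : G.Walk z v), W = Q.append R ∧
      ∀ x ∈ R.support, x ∈ T → x = z := by
  obtain ⟨z, hz, Q, R, hW, hQ⟩ :=
    W.reverse.exists_eq_append_of_first_mem T (by simpa using h)
  refine ⟨z, hz, R.reverse, Q.reverse, ?_, by simpa using hQ⟩
  rw [← reverse_append, ← hW, reverse_reverse]

theorem isPath_append_iff {p : G.Walk u v} {q : G.Walk v w} :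
    (p.append q).IsPath ↔
      p.IsPath ∧ q.IsPath ∧ ∀ x ∈ p.support, x ∈ q.support → x = v := by
  refine ⟨fun h => ⟨h.of_append_left, h.of_append_right, fun x hp hq => ?_⟩, ?_⟩
  · by_contra hxv
    exact h.ne_of_mem_support_of_append hxv hp hq rfl
  · rintro ⟨hp, hq, hpq⟩
    have hq' := hq.support_nodup
    rw [← cons_tail_support] at hq'
    rw [isPath_def, support_append]
    refine hp.support_nodup.append (List.nodup_cons.mp hq').2 fun x hxp hxq => ?_
    obtain rfl := hpq x hxp (List.mem_of_mem_tail hxq)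
    exact (List.nodup_cons.mp hq').1 hxq

variable {s t a b y₁ y₂ f₁ f₂ : V}

theorem isPath_append_append_of_replace {pa : G.Walk s a} {mid : G.Walk a b}
    {pb : G.Walk b t} (hp : (pa.append (mid.append pb)).IsPath) (hab : a ≠ b)
    {D : G.Walk a b} (hD : D.IsPath)
    (hDp : ∀ x ∈ D.support, x ∈ (pa.append (mid.append pb)).support → x = a ∨ x = b) :
    (pa.append (D.append pb)).IsPath := by
  obtain ⟨hpa, hmb, hpa_mb⟩ := isPath_append_iff.mp hp
  obtain ⟨-, hpb, hmid_pb⟩ := isPath_append_iff.mp hmb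
  have hb_pa : b ∉ pa.support := fun h =>
    hab (hpa_mb b h ((mem_support_append_iff _ _).mpr (.inr pb.start_mem_support))).symm
  have ha_pb : a ∉ pb.support := fun h => hab (hmid_pb a mid.start_mem_support h)
  refine isPath_append_iff.mpr ⟨hpa, isPath_append_iff.mpr ⟨hD, hpb, fun x hx hx' => ?_⟩,
    fun x hx hx' => ?_⟩
  · rcases hDp x hx (by simp [hx']) with rfl | rfl
    · exact absurd hx' ha_pb
    · rfl
  · rcases (mem_support_append_iff _ _).mp hx' with h | h
    · rcases hDp x h (by simp [hx]) with rfl | rfl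
      · rfl
      · exact absurd hx hb_pa
    · exact hpa_mb x hx ((mem_support_append_iff _ _).mpr (.inr h))

/-- `q` is `p` with its segment between `y₁` and `y₂` replaced by `D`. -/
theorem IsPath.exists_length_ge_of_detour {p : G.Walk s t} (hp : p.IsPath)
    (hy₁ : y₁ ∈ p.support) (hy₂ : y₂ ∈ p.support) (hne : y₁ ≠ y₂) {D : G.Walk y₁ y₂}
    (hD : D.IsPath) (hDp : ∀ x ∈ D.support, x ∈ p.support → x = y₁ ∨ x = y₂) :
    ∃ q : G.Walk s t, q.IsPath ∧ D.length ≤ q.length := by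
  obtain ⟨p₁, p₂, rfl⟩ := Walk.mem_support_iff_exists_append.mp hy₁
  rcases (mem_support_append_iff _ _).mp hy₂ with h | h
  · obtain ⟨pa, mid, rfl⟩ := Walk.mem_support_iff_exists_append.mp h
    rw [← append_assoc] at hp hDp
    refine ⟨pa.append (D.reverse.append p₂), isPath_append_append_of_replace hp hne.symm
      hD.reverse fun x hx hxp => (hDp x (by simpa using hx) hxp).symm, by simp; omega⟩
  · obtain ⟨mid, pb, rfl⟩ := Walk.mem_support_iff_exists_append.mp h
    exact ⟨p₁.append (D.append pb), isPath_append_append_of_replace hp hne hD hDp, by simp; omega⟩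

theorem IsPath.exists_isPath_length_eq_add_one {p : G.Walk s t} (hp : p.IsPath)
    (hw : w ∉ p.support) {i : ℕ} (hi : i < p.length) (h₁ : G.Adj (p.getVert i) w)
    (h₂ : G.Adj w (p.getVert (i + 1))) :
    ∃ q : G.Walk s t, q.IsPath ∧ q.length = p.length + 1 ∧ q.support ⊆ w :: p.support := by
  induction p generalizing i with
  | nil => simp at hi
  | @cons a b c h p ih =>
    obtain ⟨hp', ha⟩ := (cons_isPath_iff h p).mp hp
    have hwp : w ∉ p.support := fun h => hw (by simp [h])
    cases i with
    | zero =>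
      simp only [getVert_zero, zero_add, getVert_cons_succ] at h₁ h₂
      refine ⟨cons h₁ (cons h₂ p), ?_, by simp, ?_⟩
      · refine (hp'.cons hwp).cons ?_
        simp only [support_cons, List.mem_cons, not_or]
        exact ⟨h₁.ne, ha⟩
      · intro x hx
        simp only [support_cons, List.mem_cons] at hx ⊢
        tauto
    | succ i =>
      simp only [getVert_cons_succ] at h₁ h₂
      obtain ⟨q, hq, hlen, hsub⟩ := ih hp' hwp (by simpa using hi) h₁ h₂
      refine ⟨cons h q, hq.cons fun haq => ?_, by simp [hlen], ?_⟩
      · rcases List.mem_cons.mp (hsub haq) with rfl | haq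
        · exact hw (by simp)
        · exact ha haq
      · intro x hx
        rcases List.mem_cons.mp (support_cons _ _ ▸ hx) with rfl | hx
        · simp
        · rcases List.mem_cons.mp (hsub hx) with rfl | hx <;> simp [hx]

structure IsPathBetween (S H : Set V) {y f : V} (P : G.Walk y f) : Prop where
  isPath : P.IsPath
  start_mem : y ∈ S
  end_mem : f ∈ H
  eq_start : ∀ x ∈ P.support, x ∈ S → x = y
  eq_end : ∀ x ∈ P.support, x ∈ H → x = f

theorem isPath_append_append_reverse_of_isPathBetween {S H : Set V} (hSH : Disjoint S H)
    {P₁ : G.Walk y₁ f₁} {P₂ : G.Walk y₂ f₂} (h₁ : P₁.IsPathBetween S H)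
    (h₂ : P₂.IsPathBetween S H) (h₁₂ : P₁.support.Disjoint P₂.support) {C : G.Walk f₁ f₂}
    (hC : C.IsPath) (hCH : ∀ x ∈ C.support, x ∈ H) :
    (P₁.append (C.append P₂.reverse)).IsPath ∧
      ∀ x ∈ (P₁.append (C.append P₂.reverse)).support, x ∈ S → x = y₁ ∨ x = y₂ := by
  have hCP₂ : (C.append P₂.reverse).IsPath := isPath_append_iff.mpr
    ⟨hC, h₂.isPath.reverse, fun x hx hx' => h₂.eq_end x (by simpa using hx') (hCH x hx)⟩
  refine ⟨isPath_append_iff.mpr ⟨h₁.isPath, hCP₂, fun x hx hx' => ?_⟩, fun x hx hxS => ?_⟩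
  · rcases (mem_support_append_iff _ _).mp hx' with h | h
    · exact h₁.eq_end x hx (hCH x h)
    · exact absurd (by simpa using h) (h₁₂ hx)
  · simp only [mem_support_append_iff, support_reverse, List.mem_reverse] at hx
    rcases hx with h | h | h
    · exact .inl (h₁.eq_start x h hxS)
    · exact absurd (hCH x h) (Set.disjoint_left.mp hSH hxS)
    · exact .inr (h₂.eq_start x h hxS)

end Walk

def HasTwoDisjointPaths (G : SimpleGraph V) (S H : Set V) : Prop :=
  ∃ (y₁ f₁ y₂ f₂ : V) (P₁ : G.Walk y₁ f₁) (P₂ : G.Walk y₂ f₂),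
    P₁.IsPathBetween S H ∧ P₂.IsPathBetween S H ∧ P₁.support.Disjoint P₂.support

/-- The detour leaves `p` along one of the two paths, crosses `H` by a path longer than `p`
and returns along the other. -/
theorem Walk.IsPath.exists_length_gt_of_hasTwoDisjointPaths {p : G.Walk s t} (hp : p.IsPath)
    {H : Set V} (hHp : ∀ x ∈ H, x ∉ p.support)
    (hpaths : G.HasTwoDisjointPaths {x | x ∈ p.support} H)
    (hH : ∀ u ∈ H, ∀ v ∈ H, u ≠ v →
      ∃ C : G.Walk u v, C.IsPath ∧ p.length < C.length ∧ ∀ x ∈ C.support, x ∈ H) :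
    ∃ q : G.Walk s t, q.IsPath ∧ p.length < q.length := by
  obtain ⟨y₁, f₁, y₂, f₂, P₁, P₂, h₁, h₂, h₁₂⟩ := hpaths
  obtain ⟨C, hC, hCp, hCH⟩ := hH f₁ h₁.end_mem f₂ h₂.end_mem fun h =>
    h₁₂ P₁.end_mem_support (h ▸ P₂.end_mem_support)
  obtain ⟨hD, hDp⟩ := isPath_append_append_reverse_of_isPathBetween
    (Set.disjoint_right.mpr hHp) h₁ h₂ h₁₂ hC hCH
  obtain ⟨q, hq, hDq⟩ := hp.exists_length_ge_of_detour h₁.start_mem h₂.start_mem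
    (fun h => h₁₂ P₁.start_mem_support (h ▸ P₂.start_mem_support)) hD hDp
  exact ⟨q, hq, hCp.trans_le (le_trans (by simp; omega) hDq)⟩

theorem exists_walk_avoiding {c : V} (hc : (G.induce ({c}ᶜ : Set V)).Connected)
    (hu : u ≠ c) (hv : v ≠ c) : ∃ W : G.Walk u v, c ∉ W.support := by
  obtain ⟨W⟩ := hc.preconnected ⟨u, hu⟩ ⟨v, hv⟩
  refine ⟨W.map (Embedding.induce _).toHom, fun h => ?_⟩
  obtain ⟨x, -, hx⟩ := List.mem_map.mp ((W.support_map _) ▸ h)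
  exact x.2 hx

section

variable [DecidableEq V]

namespace Walk

theorem IsPath.start_notMem_support_dropUntil {p : G.Walk u v} (hp : p.IsPath)
    (hw : w ∈ p.support) (huw : u ≠ w) : u ∉ (p.dropUntil w hw).support := fun hu =>
  huw <| (isPath_append_iff.mp ((p.take_spec hw).symm ▸ hp)).2.2 u
    (p.takeUntil w hw).start_mem_support hu

theorem exists_isPathBetween_support_subset {S H : Set V} {a b : V} (W : G.Walk a b)
    (ha : a ∈ S) (hb : b ∈ H) :
    ∃ y f, ∃ P : G.Walk y f, P.IsPathBetween S H ∧ P.support ⊆ W.support := by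
  obtain ⟨f, hf, Q, _, hW, hQ⟩ :=
    W.bypass.exists_eq_append_of_first_mem H ⟨b, W.bypass.end_mem_support, hb⟩
  have hQ' : Q.IsPath := (hW ▸ W.bypass_isPath).of_append_left
  obtain ⟨y, hy, Q₀, P, hQP, hP⟩ :=
    Q.exists_eq_append_of_last_mem S ⟨a, Q.start_mem_support, ha⟩
  have hPQ : P.support ⊆ Q.support := fun x hx =>
    hQP ▸ (mem_support_append_iff _ _).mpr (.inr hx)
  refine ⟨y, f, P, ⟨(hQP ▸ hQ').of_append_right, hy, hf, hP, fun x hx => hQ x (hPQ hx)⟩, ?_⟩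
  exact fun x hx => W.support_bypass_subset_support (hW ▸ (mem_support_append_iff _ _).mpr
    (.inl (hPQ hx)))

end Walk

def HasTwoFan (G : SimpleGraph V) (u : V) (T : Set V) : Prop :=
  ∃ a ∈ T, ∃ b ∈ T, ∃ (A : G.Walk u a) (B : G.Walk u b),
    A.IsPath ∧ B.IsPath ∧ ∀ x ∈ A.support, x ∈ B.support → x = u

section Fan

variable {T : Set V} {a b y f : V}

open Walk

theorem hasTwoFan_of_walks (A : G.Walk u a) (B : G.Walk u b) (ha : a ∈ T) (hb : b ∈ T)
    (hAB : ∀ x ∈ A.support, x ∈ B.support → x = u) : G.HasTwoFan u T :=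
  ⟨a, ha, b, hb, A.bypass, B.bypass, A.bypass_isPath, B.bypass_isPath, fun x hA hB =>
    hAB x (A.support_bypass_subset_support hA) (B.support_bypass_subset_support hB)⟩

/-- The closed walk `u -A- y - f -B- u` is opened at `f` by a walk from `u` to `T` avoiding
`f`, continued from its last vertex on `A` or `B`. -/
theorem hasTwoFan_of_cycle (hc : (G.induce ({f}ᶜ : Set V)).Connected) (hT : T.Nontrivial)
    (hu : u ∉ T) (hf : f ∈ T) (hyf : G.Adj y f) (A : G.Walk u y) (B : G.Walk u f)
    (hB : B.IsPath) (hAB : ∀ x ∈ A.support, x ∈ B.support → x = u) : G.HasTwoFan u T := by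
  obtain ⟨τ, hτ, hτf⟩ := hT.exists_ne f
  obtain ⟨R, hRf⟩ := exists_walk_avoiding hc (ne_of_mem_of_not_mem hf hu).symm hτf
  obtain ⟨z, hz, R₁, R₂, rfl, hR₂⟩ := R.exists_eq_append_of_last_mem
    {x | x ∈ A.support ∨ x ∈ B.support} ⟨u, R.start_mem_support, .inl A.start_mem_support⟩
  have hfR₂ : f ∉ R₂.support := fun h => hRf ((mem_support_append_iff _ _).mpr (.inr h))
  by_cases hzA : z ∈ A.support
  · refine hasTwoFan_of_walks ((A.takeUntil z hzA).append R₂) B hτ hf fun x hx hxB => ?_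
    rcases (mem_support_append_iff _ _).mp hx with hx | hx
    · exact hAB x (support_takeUntil_subset_support _ _ hx) hxB
    · obtain rfl := hR₂ x hx (.inr hxB)
      exact hAB x hzA hxB
  · have hzB : z ∈ B.support := hz.resolve_left hzA
    have hzf : z ≠ f := fun h => hfR₂ (h ▸ R₂.start_mem_support)
    refine hasTwoFan_of_walks (A.concat hyf) ((B.takeUntil z hzB).append R₂) hf hτ
      fun x hx hxB => ?_
    rw [support_concat, List.mem_append, List.mem_singleton] at hx
    rcases hx with hxA | rfl <;> rcases (mem_support_append_iff _ _).mp hxB with hx | hx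
    · exact hAB x hxA (support_takeUntil_subset_support _ _ hx)
    · exact absurd (hR₂ x hx (.inl hxA) ▸ hxA) hzA
    · exact absurd hx (endpoint_notMem_support_takeUntil hB hzB hzf.symm)
    · exact absurd hx hfR₂

theorem hasTwoFan_of_adj (hc : (G.induce ({f}ᶜ : Set V)).Connected)
    (hT : T.Nontrivial) (hu : u ∉ T) (hf : f ∈ T) (hb : b ∈ T) (hyf : G.Adj y f)
    (A : G.Walk u y) (B : G.Walk u b) (hB : B.IsPath)
    (hAB : ∀ x ∈ A.support, x ∈ B.support → x = u) : G.HasTwoFan u T := by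
  by_cases hfB : f ∈ B.support
  · exact hasTwoFan_of_cycle hc hT hu hf hyf A (B.takeUntil f hfB) (hB.takeUntil hfB)
      fun x hx hx' => hAB x hx (support_takeUntil_subset_support _ _ hx')
  · refine hasTwoFan_of_walks (A.concat hyf) B hf hb fun x hx hxB => ?_
    rw [support_concat, List.mem_append, List.mem_singleton] at hx
    rcases hx with hx | rfl
    · exact hAB x hx hxB
    · exact absurd hxB hfB

theorem HasTwoFan.of_insert (hc : (G.induce ({f}ᶜ : Set V)).Connected) (hT : T.Nontrivial)
    (hu : u ∉ insert y T) (hf : f ∈ T) (hyf : G.Adj y f) (h : G.HasTwoFan u (insert y T)) :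
    G.HasTwoFan u T := by
  obtain ⟨a, ha, b, hb, A, B, hA, hB, hAB⟩ := h
  have huT : u ∉ T := fun h => hu (Set.mem_insert_of_mem y h)
  rcases ha with rfl | haT
  · have hbT : b ∈ T := hb.resolve_left fun hb => by
      subst hb
      exact hu (hAB _ A.end_mem_support B.end_mem_support ▸ Set.mem_insert _ T)
    exact hasTwoFan_of_adj hc hT huT hf hbT hyf A B hB hAB
  · rcases hb with rfl | hbT
    · exact hasTwoFan_of_adj hc hT huT hf haT hyf B A hA fun x hB hA => hAB x hA hB
    · exact ⟨a, haT, b, hbT, A, B, hA, hB, hAB⟩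

/-- Induction along a walk from `τ ∈ T` to `u`: a fan to `insert y T`, where `y` follows `τ` on
the walk, is redirected through the edge `y τ`. -/
theorem hasTwoFan (hG : ∀ c : V, (G.induce ({c}ᶜ : Set V)).Connected) (hT : T.Nontrivial)
    (hu : u ∉ T) {τ : V} (hτ : τ ∈ T) (W : G.Walk τ u) : G.HasTwoFan u T := by
  induction W generalizing T with
  | nil => exact absurd hτ hu
  | @cons τ y u h W ih =>
    by_cases hyu : y = u
    · subst hyu
      exact hasTwoFan_of_cycle (hG τ) hT hu hτ h.symm nil (cons h.symm nil)
        (IsPath.nil.cons (by simpa using h.ne.symm)) (by simp)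
    · have hu' : u ∉ insert y T := by simp [hu, Ne.symm hyu]
      exact (ih (hT.mono (Set.subset_insert y T)) hu' (Set.mem_insert y T)).of_insert
        (hG τ) hT hu' hτ h.symm

end Fan

section DisjointPaths

variable {S H : Set V} {a b r w' : V}

open Walk

/-- The walk `R` continued along `A` from `r` yields an `S`–`H` path disjoint from `B`. -/
theorem hasTwoDisjointPaths_of_fan (A : G.Walk w a) (B : G.Walk w b) (hA : A.IsPath)
    (hAB : ∀ x ∈ A.support, x ∈ B.support → x = w) (ha : a ∈ S) (hb : b ∈ S) (hw : w ∈ H)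
    (hw' : w' ∈ H) (hr : r ∈ A.support) (hrw : r ≠ w) (R : G.Walk w' r)
    (hRB : ∀ x ∈ R.support, x ∈ B.support → x = r) : G.HasTwoDisjointPaths S H := by
  have hWB : ∀ x ∈ (R.append (A.dropUntil r hr)).support, x ∉ B.support := by
    intro x hx hxB
    rcases (mem_support_append_iff _ _).mp hx with hx | hx
    · obtain rfl := hRB x hx hxB
      exact hrw (hAB x hr hxB)
    · obtain rfl := hAB x (support_dropUntil_subset_support _ _ hx) hxB
      exact hA.start_notMem_support_dropUntil hr hrw.symm hx
  obtain ⟨y₁, f₁, P₁, h₁, hP₁⟩ := B.reverse.exists_isPathBetween_support_subset hb hw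
  obtain ⟨y₂, f₂, P₂, h₂, hP₂⟩ :=
    (R.append (A.dropUntil r hr)).reverse.exists_isPathBetween_support_subset ha hw'
  exact ⟨y₁, f₁, y₂, f₂, P₁, P₂, h₁, h₂, fun x hx₁ hx₂ =>
    hWB x (by simpa [or_comm] using hP₂ hx₂) (by simpa using hP₁ hx₁)⟩

theorem hasTwoDisjointPaths (hconn : G.Connected)
    (hG : ∀ c : V, (G.induce ({c}ᶜ : Set V)).Connected) (hSH : Disjoint S H)
    (hS : S.Nontrivial) (hH : H.Nontrivial) : G.HasTwoDisjointPaths S H := by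
  obtain ⟨w, hw, w', hw', hww'⟩ := hH
  obtain ⟨s, hs⟩ := hS.nonempty
  have hwS : w ∉ S := Set.disjoint_right.mp hSH hw
  obtain ⟨a, ha, b, hb, A, B, hA, hB, hAB⟩ :=
    hasTwoFan hG hS hwS hs (hconn.preconnected s w).some
  obtain ⟨R, hRw⟩ := exists_walk_avoiding (hG w) hww'.symm (ne_of_mem_of_not_mem ha hwS)
  obtain ⟨r, hr, R₁, R₂, rfl, hR₁⟩ := R.exists_eq_append_of_first_mem
    {x | x ∈ A.support ∨ x ∈ B.support} ⟨a, R.end_mem_support, .inl A.end_mem_support⟩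
  have hrw : r ≠ w := fun h => hRw ((mem_support_append_iff _ _).mpr
    (.inl (h ▸ R₁.end_mem_support)))
  rcases hr with hrA | hrB
  · exact hasTwoDisjointPaths_of_fan A B hA hAB ha hb hw hw' hrA hrw R₁
      fun x hx hxB => hR₁ x hx (.inr hxB)
  · exact hasTwoDisjointPaths_of_fan B A hB (fun x hB hA => hAB x hA hB) hb ha hw hw' hrB hrw
      R₁ fun x hx hxA => hR₁ x hx (.inl hxA)

end DisjointPaths

section Counting

open Finset Walk

variable [Fintype V] [DecidableRel G.Adj]

theorem exists_common_neighbor_of_le_card {H : Finset V} {m : ℕ}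
    (hH : ∀ u ∈ H, ∀ v ∈ H, u ≠ v → m ≤ #(G.neighborFinset u ∩ G.neighborFinset v ∩ H))
    (hm : 0 < m) {u v : V} (hu : u ∈ H) (hv : v ∈ H) (huv : u ≠ v) :
    ∃ x ∈ H, G.Adj u x ∧ G.Adj x v := by
  obtain ⟨x, hx⟩ := card_pos.mp (hm.trans_le (hH u hu v hv huv))
  simp only [mem_inter, mem_neighborFinset] at hx
  exact ⟨x, hx.2, hx.1.1, hx.1.2.symm⟩

/-- Greedy construction: step to a common neighbour of the current vertex and `v`, then
continue inside `H` with the current vertex removed. -/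
theorem exists_isPath_length_eq_of_le_card_common_neighbors {H : Finset V} {m : ℕ}
    (hH : ∀ u ∈ H, ∀ v ∈ H, u ≠ v → m ≤ #(G.neighborFinset u ∩ G.neighborFinset v ∩ H))
    {j : ℕ} (hj : j < m) {u v : V} (hu : u ∈ H) (hv : v ∈ H) (huv : u ≠ v) :
    ∃ C : G.Walk u v, C.IsPath ∧ C.length = j + 2 ∧ ∀ x ∈ C.support, x ∈ H := by
  induction j generalizing m H u with
  | zero =>
    obtain ⟨x, hxH, hux, hxv⟩ := exists_common_neighbor_of_le_card hH hj hu hv huv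
    refine ⟨cons hux (cons hxv nil), ?_, rfl, ?_⟩
    · simp [cons_isPath_iff, hux.ne, huv, hxv.ne]
    · simp [hu, hv, hxH]
  | succ j ih =>
    obtain ⟨x, hxH, hux, hxv⟩ := exists_common_neighbor_of_le_card hH (by omega) hu hv huv
    have hH' : ∀ a ∈ H.erase u, ∀ b ∈ H.erase u, a ≠ b →
        m - 1 ≤ #(G.neighborFinset a ∩ G.neighborFinset b ∩ H.erase u) := fun a ha b hb hab => by
      rw [inter_erase]
      exact (Nat.sub_le_sub_right (hH a (mem_of_mem_erase ha) b (mem_of_mem_erase hb) hab) 1).trans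
        pred_card_le_card_erase
    obtain ⟨C, hC, hlen, hCH⟩ := ih hH' (by omega) (mem_erase.mpr ⟨hux.ne', hxH⟩)
      (mem_erase.mpr ⟨huv.symm, hv⟩) hxv.ne
    refine ⟨cons hux C, hC.cons fun h => notMem_erase u H (hCH u h), by simp [hlen], ?_⟩
    intro y hy
    rcases List.mem_cons.mp (support_cons _ _ ▸ hy) with rfl | hy
    · exact hu
    · exact mem_of_mem_erase (hCH y hy)

/-- The neighbours of a vertex off a longest path `p` occupy no two consecutive positions
of `p`, else the vertex could be inserted between them. -/
theorem Walk.IsPath.two_mul_degree_add_length_le {p : G.Walk s t} (hp : p.IsPath)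
    (hmax : ∀ q : G.Walk s t, q.IsPath → q.length ≤ p.length) (hw : w ∉ p.support) :
    2 * G.degree w + p.length + 2 ≤ 2 * Fintype.card V := by
  set T := (range (p.length + 1)).filter fun i => G.Adj w (p.getVert i)
  have hT : 2 * #T ≤ p.length + 2 := two_mul_card_le_of_succ_notMem (filter_subset _ _)
    fun i hi hi' => by
      simp only [T, mem_filter, mem_range] at hi hi'
      obtain ⟨q, hq, hlen, -⟩ :=
        hp.exists_isPath_length_eq_add_one hw (by omega) hi.2.symm hi'.2
      have := hmax q hq
      omega
  have hNT : #(G.neighborFinset w ∩ p.support.toFinset) ≤ #T := by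
    refine (card_le_card fun x hx => ?_).trans (card_image_le (f := p.getVert))
    simp only [mem_inter, mem_neighborFinset, List.mem_toFinset] at hx
    obtain ⟨n, rfl, hn⟩ := mem_support_iff_exists_getVert.mp hx.2
    exact mem_image.mpr ⟨n, mem_filter.mpr ⟨mem_range.mpr (by omega), hx.1⟩, rfl⟩
  have hcover : #(G.neighborFinset w ∪ p.support.toFinset) < Fintype.card V :=
    card_lt_univ_of_notMem (x := w) (by simp [hw])
  have hunion := card_union_add_card_inter (G.neighborFinset w) p.support.toFinset
  rw [card_neighborFinset_eq_degree, List.toFinset_card_of_nodup hp.support_nodup,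
    length_support] at hunion
  omega

end Counting

end

end SimpleGraph

section MinDegreeOutside

open Finset

variable {V : Type*} [Fintype V] [DecidableEq V] {G : SimpleGraph V} [DecidableRel G.Adj]
  {B : Finset V} {u v : V}

theorem deltaB_le_card_filter (hv : v ∉ B) :
    deltaB G B ≤ #((G.neighborFinset v).filter (· ∉ B)) :=
  Nat.sInf_le ⟨v, hv, rfl⟩

theorem two_mul_deltaB_le (hu : u ∉ B) (hv : v ∉ B) (P : Finset V) :
    2 * deltaB G B ≤
      Fintype.card V + #P + #(G.neighborFinset u ∩ G.neighborFinset v ∩ (Bᶜ \ P)) := by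
  have := deltaB_le_card_filter (G := G) hu
  have := deltaB_le_card_filter (G := G) hv
  set Nu := (G.neighborFinset u).filter (· ∉ B)
  set Nv := (G.neighborFinset v).filter (· ∉ B)
  have hsub : (Nu ∩ Nv) \ P ⊆ G.neighborFinset u ∩ G.neighborFinset v ∩ (Bᶜ \ P) := by
    intro x
    simp only [Nu, Nv, mem_sdiff, mem_inter, mem_filter, mem_compl]
    tauto
  have := card_union_add_card_inter Nu Nv
  have := card_le_univ (Nu ∪ Nv)
  have := card_le_card_sdiff_add_card (s := Nu ∩ Nv) (t := P)
  have := card_le_card hsub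
  omega

end MinDegreeOutside

open Finset SimpleGraph

theorem stmt_10_general {V : Type*} [Fintype V] [DecidableEq V] (G : SimpleGraph V)
    [DecidableRel G.Adj] (B : Finset V) (h2 : TwoConnected G)
    (h65 : 5 * Fintype.card V ≤ 6 * deltaB G B)
    (s t : V) (hst : s ≠ t)
    (p : G.Walk s t) (hp : p.IsPath)
    (hmax : ∀ q : G.Walk s t, q.IsPath → q.length ≤ p.length) :
    ∀ w : V, w ∉ B → w ∈ p.support := by
  intro w hwB
  by_contra hwp
  set H := Bᶜ \ p.support.toFinset
  have hdeg := hp.two_mul_degree_add_length_le hmax hwp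
  have hδw := (deltaB_le_card_filter (G := G) hwB).trans (card_filter_le _ _)
  have hP : #p.support.toFinset = p.length + 1 := by
    rw [List.toFinset_card_of_nodup hp.support_nodup, Walk.length_support]
  rw [card_neighborFinset_eq_degree] at hδw
  have hcommon : ∀ u ∈ H, ∀ v ∈ H,
      p.length + 1 ≤ #(G.neighborFinset u ∩ G.neighborFinset v ∩ H) := fun u hu v hv => by
    show _ ≤ #(G.neighborFinset u ∩ G.neighborFinset v ∩ (Bᶜ \ p.support.toFinset))
    have := two_mul_deltaB_le (G := G) (mem_compl.mp (mem_sdiff.mp hu).1)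
      (mem_compl.mp (mem_sdiff.mp hv).1) p.support.toFinset
    omega
  have hwH : w ∈ H := by simp [H, hwB, hwp]
  obtain ⟨w', hw'⟩ := card_pos.mp ((Nat.succ_pos _).trans_le (hcommon w hwH w hwH))
  simp only [mem_inter, mem_neighborFinset] at hw'
  have hHp : ∀ x ∈ (H : Set V), x ∉ p.support := fun x hx h =>
    (mem_sdiff.mp hx).2 (List.mem_toFinset.mpr h)
  have hpaths := hasTwoDisjointPaths h2.1 h2.2.2 (Set.disjoint_right.mpr hHp)
    ⟨s, p.start_mem_support, t, p.end_mem_support, hst⟩ ⟨w, hwH, w', hw'.2, hw'.1.1.ne⟩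
  obtain ⟨q, hq, hlt⟩ := hp.exists_length_gt_of_hasTwoDisjointPaths hHp hpaths
    fun u hu v hv huv => by
      obtain ⟨C, hC, hlen, hCH⟩ := exists_isPath_length_eq_of_le_card_common_neighbors
        (fun u hu v hv _ => hcommon u hu v hv) (lt_add_one p.length) hu hv huv
      exact ⟨C, hC, by omega, hCH⟩
  exact (hmax q hq).not_gt hlt

/-- Let `G` be a 2-connected graph with `B ⊆ V(G)` such that `(6/5)·δ(G−B) ≥ |V(G)|`
and `δ(G−B) ≥ 4|B|`. Then for any pair of distinct vertices `s, t`, every longest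
`(s,t)`-path in `G` contains all vertices of `V(G) \ B`. -/
theorem stmt_10 {V : Type*} [Fintype V] [DecidableEq V] (G : SimpleGraph V)
    [DecidableRel G.Adj] (B : Finset V) (h2 : TwoConnected G)
    (h65 : 5 * Fintype.card V ≤ 6 * deltaB G B)
    (h4B : 4 * B.card ≤ deltaB G B)
    (s t : V) (hst : s ≠ t)
    (p : G.Walk s t) (hp : p.IsPath)
    (hmax : ∀ q : G.Walk s t, q.IsPath → q.length ≤ p.length) :
    ∀ w : V, w ∉ B → w ∈ p.support :=
  stmt_10_general G B h2 h65 s t hst p hp hmax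
end

section
/- Let C be a cycle in a graph G and let h ∈ V(G)\V(C). Call a vertex v ∈ V(C) a 101-neighbor of h if v is not adjacent to h but both neighbors of v on C are adjacent to h. If two 101-neighbors v1, v2 of h are joined by an edge of G, then G contains a cycle on vertex set V(C) ∪ {h}, i.e., a cycle of length |V(C)| + 1. -/
/-!
Let `x₁` and `y₁` be the successors of `v₁` and `v₂` on `C` (in the same orientation); by the
101-condition both are adjacent to `h`. Walking along `C` from `x₁` to `v₂`, crossing the chord
`v₂v₁`, and walking back along `C` from `v₁` to `y₁` gives a path through every vertex of `C`;
closing it up through `h` gives the required cycle.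
-/

/-- `v` is a 101-neighbor of `h` with respect to a cycle `c`: `v` lies on `c`, is not
adjacent to `h`, but every neighbor of `v` along the cycle is adjacent to `h`. -/
def Is101Neighbor {V : Type*} (G : SimpleGraph V) {r : V} (c : G.Walk r r)
    (h v : V) : Prop :=
  v ∈ c.support ∧ ¬ G.Adj h v ∧ ∀ u, s(u, v) ∈ c.edges → G.Adj h u

namespace SimpleGraph.Walk

variable {V : Type*} {G : SimpleGraph V}

lemma exists_eq_cons_append_cons {u v : V} (c : G.Walk u u) (hv : v ∈ c.support) (huv : u ≠ v) :
    ∃ (x y : V) (hux : G.Adj u x) (P : G.Walk x v) (hvy : G.Adj v y) (Q : G.Walk y u),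
      c = (cons hux P).append (cons hvy Q) := by
  classical
  obtain ⟨x, hux, P, hP⟩ := not_nil_iff.mp (not_nil_of_ne (p := c.takeUntil v hv) huv)
  obtain ⟨y, hvy, Q, hQ⟩ := not_nil_iff.mp (not_nil_of_ne (p := c.dropUntil v hv) huv.symm)
  exact ⟨x, y, hux, P, hvy, Q, by rw [← hP, ← hQ, take_spec]⟩

lemma IsCycle.isPath_append_cons_reverse {u v x y : V} {hux : G.Adj u x} {P : G.Walk x v}
    {hvy : G.Adj v y} {Q : G.Walk y u} (hc : ((cons hux P).append (cons hvy Q)).IsCycle)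
    (hvu : G.Adj v u) : (P.append (cons hvu Q.reverse)).IsPath := by
  have hnodup : (P.support ++ Q.support).Nodup := by
    simpa [support_append] using hc.support_nodup
  rw [isPath_def, support_append, support_cons, support_reverse, List.tail_cons]
  exact ((List.reverse_perm _).append_left _).nodup_iff.mpr hnodup

/-- The 2-opt move: a chord `uv` of a cycle through `u` turns the cycle into a spanning path
between the successors of `u` and `v`. -/
lemma IsCycle.exists_isPath_of_adj {r u v : V} {c : G.Walk r r} (hc : c.IsCycle)
    (hu : u ∈ c.support) (hv : v ∈ c.support) (huv : G.Adj u v) :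
    ∃ x y, s(u, x) ∈ c.edges ∧ s(v, y) ∈ c.edges ∧ ∃ p : G.Walk x y,
      p.IsPath ∧ p.length + 1 = c.length ∧ ∀ z, z ∈ p.support ↔ z ∈ c.support := by
  classical
  have hv' : v ∈ (c.rotate u hu).support := (c.mem_support_rotate_iff u hu).mpr hv
  obtain ⟨x, y, hux, P, hvy, Q, hd⟩ := exists_eq_cons_append_cons _ hv' huv.ne
  have hdc : ((cons hux P).append (cons hvy Q)).IsCycle := hd ▸ hc.rotate hu
  have hedges : ∀ e, e ∈ ((cons hux P).append (cons hvy Q)).edges ↔ e ∈ c.edges := fun e ↦ by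
    rw [← hd]; exact (c.rotate_edges u hu).perm.mem_iff
  have hsupport : ∀ z, z ∈ ((cons hux P).append (cons hvy Q)).support ↔ z ∈ c.support :=
    fun z ↦ by rw [← hd]; exact c.mem_support_rotate_iff u hu
  have hlength : ((cons hux P).append (cons hvy Q)).length = c.length := by
    rw [← hd, length_rotate]
  refine ⟨x, y, (hedges _).mp (by simp [edges_append]), (hedges _).mp (by simp [edges_append]),
    P.append (cons huv.symm Q.reverse), hdc.isPath_append_cons_reverse huv.symm, ?_, fun z ↦ ?_⟩
  · simp only [length_append, length_cons, length_reverse] at hlength ⊢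
    omega
  · rw [← hsupport]
    simp only [support_append, support_cons, support_reverse, List.tail_cons, List.mem_append,
      List.mem_cons, List.mem_reverse]
    have hvP := P.end_mem_support
    have huQ := Q.end_mem_support
    grind

lemma IsPath.cons_concat_isCycle {w x y : V} {p : G.Walk x y} (hp : p.IsPath)
    (hlen : 0 < p.length) (hw : w ∉ p.support) (hwx : G.Adj w x) (hyw : G.Adj y w) :
    (cons hwx (p.concat hyw)).IsCycle := by
  rw [isCycle_iff_isPath_tail_and_le_length]
  refine ⟨by simpa using hp.concat hw hyw, ?_⟩
  simp only [length_cons, length_concat]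
  omega

end SimpleGraph.Walk

open SimpleGraph Walk in
theorem stmt_18_general {V : Type*} (G : SimpleGraph V) (r : V) (c : G.Walk r r)
    (hc : c.IsCycle) (h : V) (hhC : h ∉ c.support)
    (v₁ v₂ : V) (h1 : Is101Neighbor G c h v₁) (h2 : Is101Neighbor G c h v₂)
    (hadj : G.Adj v₁ v₂) :
    ∃ (w : V) (c' : G.Walk w w), c'.IsCycle ∧ c'.length = c.length + 1 ∧
      {x | x ∈ c'.support} = insert h {x | x ∈ c.support} := by
  obtain ⟨x, y, hx, hy, p, hp, hlen, hsupp⟩ := hc.exists_isPath_of_adj h1.1 h2.1 hadj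
  have hhx : G.Adj h x := h1.2.2 x (by rwa [Sym2.eq_swap])
  have hhy : G.Adj h y := h2.2.2 y (by rwa [Sym2.eq_swap])
  have hhp : h ∉ p.support := fun hh ↦ hhC ((hsupp h).mp hh)
  have hpos : 0 < p.length := by have := hc.three_le_length; omega
  refine ⟨h, cons hhx (p.concat hhy.symm), hp.cons_concat_isCycle hpos hhp hhx hhy.symm, ?_, ?_⟩
  · simp only [length_cons, length_concat]
    omega
  · ext z
    simp [support_concat, hsupp, or_comm]

/-- Let `C` be a cycle (with at least 6 vertices) in `G` and `h ∉ V(C)`. If two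
101-neighbors `v₁, v₂` of `h` are joined by an edge of `G`, then `G` contains a cycle
on the vertex set `V(C) ∪ {h}`, i.e. of length `|V(C)| + 1`. -/
theorem stmt_18 {V : Type*} (G : SimpleGraph V) (r : V) (c : G.Walk r r)
    (hc : c.IsCycle) (hlen : 6 ≤ c.length) (h : V) (hhC : h ∉ c.support)
    (v₁ v₂ : V) (h1 : Is101Neighbor G c h v₁) (h2 : Is101Neighbor G c h v₂)
    (h12 : v₁ ≠ v₂) (hadj : G.Adj v₁ v₂) :
    ∃ (w : V) (c' : G.Walk w w), c'.IsCycle ∧ c'.length = c.length + 1 ∧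
      {x | x ∈ c'.support} = insert h {x | x ∈ c.support} :=
  stmt_18_general G r c hc h hhC v₁ v₂ h1 h2 hadj
end

section
/- Let h be a vertex outside a cycle C in a graph G such that all neighbors of h lie on C and h has at least δ neighbors on C, where |V(C)| ≤ 2δ + k − 1, and assume that every arc of C between two consecutive neighbors of h has length at least 2, where the arcs of length 2 correspond exactly to the 101-neighbors of h (vertices of C not adjacent to h both of whose cycle-neighbors are adjacent to h) and all other arcs have length at least 3. Then the number a of 101-neighbors of h satisfies a ≥ 3δ − |V(C)| > δ − k. -/
open scoped Classical

open SimpleGraph Walk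

private lemma support_getElem_aux {V : Type*} {G : SimpleGraph V} :
    ∀ {u v : V} (p : G.Walk u v) (i : ℕ) (hi : i < p.length + 1),
      p.support[i]'(by rw [SimpleGraph.Walk.length_support]; exact hi) = p.getVert i
  | _, _, .nil, 0, _ => rfl
  | _, _, .cons ha p, 0, _ => rfl
  | _, _, .cons ha p, (i+1), hi => by
      simpa using support_getElem_aux p i (by simpa using hi)

private lemma getVert_inj_of_isCycle {V : Type*} {G : SimpleGraph V} {r : V}
    {c : G.Walk r r} (hc : c.IsCycle) {i j : ℕ} (hi : i < c.length) (hj : j < c.length)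
    (hij : c.getVert i = c.getVert j) : i = j := by
  have hnd : c.support.tail.Nodup := hc.support_nodup
  have hn3 : 3 ≤ c.length := hc.three_le_length
  have hlen : c.support.tail.length = c.length := by
    rw [List.length_tail, SimpleGraph.Walk.length_support]; omega
  have hget : ∀ (m : ℕ) (hm : m < c.length),
      c.support.tail[m]'(by omega) = c.getVert (m+1) := by
    intro m hm
    rw [List.getElem_tail]
    exact support_getElem_aux c (m+1) (by omega)
  have e0 : c.getVert c.length = c.getVert 0 := by
    rw [SimpleGraph.Walk.getVert_length, SimpleGraph.Walk.getVert_zero]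
  have key : ∀ a b : ℕ, a < c.length → b < c.length →
      c.getVert (a+1) = c.getVert (b+1) → a = b := by
    intro a b ha hb hab
    exact (hnd.getElem_inj_iff (i := a) (hi := by omega) (j := b) (hj := by omega)).mp
      (by rw [hget a ha, hget b hb]; exact hab)
  rcases Nat.eq_zero_or_pos i with hi0 | hi0
  · rcases Nat.eq_zero_or_pos j with hj0 | hj0
    · omega
    · subst hi0
      have : c.length - 1 = j - 1 := key _ _ (by omega) (by omega)
        (by rw [show c.length - 1 + 1 = c.length by omega, e0,
              show j - 1 + 1 = j by omega]; exact hij)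
      omega
  · rcases Nat.eq_zero_or_pos j with hj0 | hj0
    · subst hj0
      have : i - 1 = c.length - 1 := key _ _ (by omega) (by omega)
        (by rw [show c.length - 1 + 1 = c.length by omega, e0,
              show i - 1 + 1 = i by omega]; exact hij)
      omega
    · have : i - 1 = j - 1 := key _ _ (by omega) (by omega)
        (by rw [show i - 1 + 1 = i by omega, show j - 1 + 1 = j by omega]; exact hij)
      omega

/-- Let `h` be a vertex outside a cycle `C` in `G` whose neighbors all lie on `C`,
with at least `δ` neighbors, where `|V(C)| ≤ 2δ + k − 1`. Assume no two neighbors of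
`h` are adjacent on `C` (every arc between consecutive neighbors has length ≥ 2).
Then the number `a` of 101-neighbors of `h` (vertices of `C` not adjacent to `h`
whose both cycle-neighbors are adjacent to `h`) satisfies
`a ≥ 3δ − |V(C)| > δ − k`. -/
theorem stmt_19 {V : Type*} [Fintype V] [DecidableEq V] (G : SimpleGraph V)
    [DecidableRel G.Adj] (r : V) (c : G.Walk r r) (hc : c.IsCycle)
    (h : V) (hhC : h ∉ c.support) (δ k : ℕ)
    (hN : ∀ x, G.Adj h x → x ∈ c.support)
    (hδ : δ ≤ G.degree h)
    (hlen : c.length + 1 ≤ 2 * δ + k)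
    (hno : ∀ x y, G.Adj h x → G.Adj h y → s(x, y) ∉ c.edges) :
    3 * (δ : ℤ) - (c.length : ℤ) ≤
      ((c.support.toFinset.filter fun v =>
        ¬ G.Adj h v ∧ ∀ u, s(u, v) ∈ c.edges → G.Adj h u).card : ℤ) ∧
    (δ : ℤ) - (k : ℤ) < 3 * (δ : ℤ) - (c.length : ℤ) := by
  set n := c.length with hn
  have hn3 : 3 ≤ n := hc.three_le_length
  have hnpos : 0 < n := by omega
  set g : ℕ → V := fun i => c.getVert (i % n) with hg
  -- periodicity
  have hper : ∀ i, g (i % n) = g i := by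
    intro i
    simp only [hg, Nat.mod_mod_of_dvd _ dvd_rfl]
  -- g agrees with getVert up to n
  have hgvert : ∀ i ≤ n, g i = c.getVert i := by
    intro i hi
    rcases eq_or_lt_of_le hi with h' | h'
    · subst h'
      show c.getVert (n % n) = c.getVert n
      rw [Nat.mod_self, SimpleGraph.Walk.getVert_zero, hn, SimpleGraph.Walk.getVert_length]
    · simp only [hg, Nat.mod_eq_of_lt h']
  -- injectivity of g on [0, n)
  have hginj : ∀ i < n, ∀ j < n, g i = g j → i = j := by
    intro i hi j hj hij
    rw [hgvert i hi.le, hgvert j hj.le] at hij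
    exact getVert_inj_of_isCycle hc hi hj hij
  -- successor step: g (i+1) = getVert (i % n + 1)
  have hsucc : ∀ i, g (i + 1) = c.getVert (i % n + 1) := by
    intro i
    have h1 : i % n < n := Nat.mod_lt _ hnpos
    have h2 : (i + 1) % n = (i % n + 1) % n := by
      rw [Nat.add_mod i 1 n, Nat.mod_eq_of_lt (show 1 < n by omega)]
    show c.getVert ((i + 1) % n) = c.getVert (i % n + 1)
    rw [h2]
    calc c.getVert ((i % n + 1) % n) = g (i % n + 1) := rfl
      _ = c.getVert (i % n + 1) := hgvert _ (by omega)
  -- edges of the cycle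
  have key_edge : ∀ i, s(g i, g (i + 1)) ∈ c.edges := by
    intro i
    have h1 : i % n < n := Nat.mod_lt _ hnpos
    rw [← SimpleGraph.Walk.mem_edges_toSubgraph, SimpleGraph.Subgraph.mem_edgeSet]
    have : g i = c.getVert (i % n) := rfl
    rw [this, hsucc i]
    exact c.toSubgraph_adj_getVert h1
  -- edge characterization
  have edge_char : ∀ u v : V, s(u, v) ∈ c.edges →
      ∃ m < n, (u = g m ∧ v = g (m + 1)) ∨ (v = g m ∧ u = g (m + 1)) := by
    intro u v he
    have : c.toSubgraph.Adj u v := by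
      rw [← SimpleGraph.Subgraph.mem_edgeSet, SimpleGraph.Walk.mem_edges_toSubgraph]
      exact he
    obtain ⟨m, hme, hm⟩ := (c.toSubgraph_adj_iff).mp this
    refine ⟨m, hm, ?_⟩
    have e1 : c.getVert m = g m := (hgvert m hm.le).symm
    have e2 : c.getVert (m + 1) = g (m + 1) := (hgvert (m + 1) (by omega)).symm
    rw [e1, e2, Sym2.eq_iff] at hme
    rcases hme with ⟨h1, h2⟩ | ⟨h1, h2⟩
    · exact Or.inl ⟨h1.symm, h2.symm⟩
    · exact Or.inr ⟨h1.symm, h2.symm⟩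
  -- g i in support
  have hmem : ∀ i, g i ∈ c.support := by
    intro i
    rw [SimpleGraph.Walk.mem_support_iff_exists_getVert]
    exact ⟨i % n, rfl, (Nat.mod_lt _ hnpos).le⟩
  -- the index sets
  set D := (Finset.range n).filter (fun i => G.Adj h (g i)) with hD
  set B := D.filter (fun i => (i + 2) % n ∈ D) with hB
  set A := c.support.toFinset.filter fun v =>
        ¬ G.Adj h v ∧ ∀ u, s(u, v) ∈ c.edges → G.Adj h u with hA
  have hDsub : D ⊆ Finset.range n := Finset.filter_subset _ _
  have hBsub : B ⊆ D := Finset.filter_subset _ _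
  -- i ∈ D → (i+1) % n ∉ D
  have F1 : ∀ i ∈ D, (i + 1) % n ∉ D := by
    intro i hi hcon
    rw [hD, Finset.mem_filter] at hi hcon
    exact hno _ _ hi.2 (by rw [hper] at hcon; exact hcon.2) (key_edge i)
  -- cancellation: (i + m) % n = (j + m) % n → i = j for i j < n
  have hcancel : ∀ m : ℕ, ∀ i < n, ∀ j < n, (i + m) % n = (j + m) % n → i = j := by
    intro m i hi j hj hmod
    have : i ≡ j [MOD n] := (Nat.ModEq.add_right_cancel' m hmod)
    rwa [Nat.ModEq, Nat.mod_eq_of_lt hi, Nat.mod_eq_of_lt hj] at this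
  -- the three disjoint sets
  set S2 := D.image (fun i => (i + 1) % n) with hS2
  set S3 := (D \ B).image (fun i => (i + 2) % n) with hS3
  have hS2card : S2.card = D.card :=
    Finset.card_image_of_injOn (fun i hi j hj => hcancel 1 i
      (Finset.mem_range.mp (hDsub hi)) j (Finset.mem_range.mp (hDsub hj)))
  have hS3card : S3.card = (D \ B).card :=
    Finset.card_image_of_injOn (fun i hi j hj => hcancel 2 i
      (Finset.mem_range.mp (hDsub (Finset.mem_sdiff.mp hi).1)) j
      (Finset.mem_range.mp (hDsub (Finset.mem_sdiff.mp hj).1)))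
  have hS2sub : S2 ⊆ Finset.range n := by
    intro x hx
    obtain ⟨i, _, rfl⟩ := Finset.mem_image.mp hx
    exact Finset.mem_range.mpr (Nat.mod_lt _ hnpos)
  have hS3sub : S3 ⊆ Finset.range n := by
    intro x hx
    obtain ⟨i, _, rfl⟩ := Finset.mem_image.mp hx
    exact Finset.mem_range.mpr (Nat.mod_lt _ hnpos)
  have hdisj12 : Disjoint D S2 := by
    rw [Finset.disjoint_right]
    intro x hx hxD
    obtain ⟨i, hi, rfl⟩ := Finset.mem_image.mp hx
    exact F1 i hi hxD
  have hdisj13 : Disjoint D S3 := by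
    rw [Finset.disjoint_right]
    intro x hx hxD
    obtain ⟨i, hi, rfl⟩ := Finset.mem_image.mp hx
    rw [Finset.mem_sdiff] at hi
    exact hi.2 (by rw [hB, Finset.mem_filter]; exact ⟨hi.1, hxD⟩)
  have hdisj23 : Disjoint S2 S3 := by
    rw [Finset.disjoint_left]
    intro x hx hx3
    obtain ⟨i, hi, rfl⟩ := Finset.mem_image.mp hx
    obtain ⟨j, hj, hji⟩ := Finset.mem_image.mp hx3
    rw [Finset.mem_sdiff] at hj
    -- (j+2) % n = (i+1) % n, so i = (j+1) % n
    have hin : i < n := Finset.mem_range.mp (hDsub hi)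
    have hjn : j < n := Finset.mem_range.mp (hDsub hj.1)
    have : i = (j + 1) % n := by
      apply hcancel 1 i hin ((j + 1) % n) (Nat.mod_lt _ hnpos)
      rw [← hji]
      conv_rhs => rw [Nat.add_mod, Nat.mod_mod_of_dvd _ dvd_rfl, ← Nat.add_mod]
    exact F1 j hj.1 (this ▸ hi)
  -- count: 3 sets inside range n
  have hcard3 : D.card + S2.card + S3.card ≤ n := by
    have h1 : (D ∪ S2 ∪ S3).card ≤ n := by
      simpa using Finset.card_le_card
        (Finset.union_subset (Finset.union_subset hDsub hS2sub) hS3sub)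
    rwa [Finset.card_union_of_disjoint (by
        rw [Finset.disjoint_union_left]; exact ⟨hdisj13, hdisj23⟩),
      Finset.card_union_of_disjoint hdisj12] at h1
  have hDB : (D \ B).card = D.card - B.card := Finset.card_sdiff_of_subset hBsub
  have hBD : B.card ≤ D.card := Finset.card_le_card hBsub
  -- δ ≤ D.card
  have hdeg : δ ≤ D.card := by
    refine le_trans hδ ?_
    have hsub : G.neighborFinset h ⊆ D.image g := by
      intro x hx
      rw [SimpleGraph.mem_neighborFinset] at hx
      obtain ⟨m, hmx, hmn⟩ := (SimpleGraph.Walk.mem_support_iff_exists_getVert).mp (hN x hx)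
      have hgm : g m = x := by rw [hgvert m hmn]; exact hmx
      refine Finset.mem_image.mpr ⟨m % n, ?_, by rw [hper]; exact hgm⟩
      rw [hD, Finset.mem_filter]
      exact ⟨Finset.mem_range.mpr (Nat.mod_lt _ hnpos), by rw [hper, hgm]; exact hx⟩
    calc G.degree h = (G.neighborFinset h).card := rfl
      _ ≤ (D.image g).card := Finset.card_le_card hsub
      _ ≤ D.card := Finset.card_image_le
  -- B.card ≤ A.card via i ↦ g (i+1)
  have hBA : B.card ≤ A.card := by
    apply Finset.card_le_card_of_injOn (fun i => g (i + 1))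
    · intro i hiB
      have hiD : i ∈ D := hBsub hiB
      have hin : i < n := Finset.mem_range.mp (hDsub hiD)
      simp only [Finset.mem_coe, hB, Finset.mem_filter] at hiB
      simp only [Finset.mem_coe, hA, Finset.mem_filter]
      refine ⟨List.mem_toFinset.mpr (hmem _), ?_, ?_⟩
      · -- not adjacent
        intro hadj
        refine F1 i hiD ?_
        rw [hD, Finset.mem_filter]
        exact ⟨Finset.mem_range.mpr (Nat.mod_lt _ hnpos), by rwa [hper]⟩
      · intro u hu
        obtain ⟨m, hm, hcase⟩ := edge_char u (g (i + 1)) hu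
        rcases hcase with ⟨hu1, hu2⟩ | ⟨hu1, hu2⟩
        · -- u = g m, g (i+1) = g (m+1) → m = i
          have : (m + 1) % n = (i + 1) % n := by
            apply hginj _ (Nat.mod_lt _ hnpos) _ (Nat.mod_lt _ hnpos)
            rw [hper, hper, ← hu2]
          have hmi : m = i := hcancel 1 m hm i hin this
          subst hmi
          rw [hD, Finset.mem_filter] at hiD
          rw [hu1]; exact hiD.2
        · -- g (i+1) = g m, u = g (m+1) → m = (i+1) % n, u = g (i+2)
          have hmeq : m = (i + 1) % n := by
            apply hginj _ hm _ (Nat.mod_lt _ hnpos)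
            rw [hper, ← hu1]
          have hidx : ((i + 1) % n + 1) % n = (i + 2) % n := by
            conv_rhs => rw [show i + 2 = i + 1 + 1 by ring]
            rw [Nat.add_mod (i+1) 1 n, Nat.add_mod ((i+1) % n) 1 n,
              Nat.mod_mod_of_dvd _ dvd_rfl]
          have hueq : u = g ((i + 2) % n) := by
            rw [hu2, hmeq, ← hidx, hper]
          have hi2 : (i + 2) % n ∈ D := hiB.2
          rw [hD, Finset.mem_filter] at hi2
          rw [hueq]
          exact hi2.2
    · intro i hi j hj hij
      have hin : i < n := Finset.mem_range.mp (hDsub (hBsub hi))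
      have hjn : j < n := Finset.mem_range.mp (hDsub (hBsub hj))
      refine hcancel 1 i hin j hjn ?_
      apply hginj _ (Nat.mod_lt _ hnpos) _ (Nat.mod_lt _ hnpos)
      rw [hper, hper]
      exact hij
  -- put it together
  have hfin : 3 * D.card ≤ n + B.card := by omega
  constructor
  · have h1 : 3 * δ ≤ n + A.card := by
      calc 3 * δ ≤ 3 * D.card := by omega
        _ ≤ n + B.card := hfin
        _ ≤ n + A.card := by omega
    push_cast
    omega
  · push_cast
    omega
end
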